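/- arXiv:2604.22699 — 10 statements merged into one kernel-verified Lean document; each statement's English description precedes it below -/
import Mathlib

section
/- There is a universal constant C > 0 such that for every probability space (Ω, 𝓕, μ), every real c ∈ (0, 1), and all nonnegative random variables X, Y : Ω → ℝ such that X, Y, X·Y, X·Y^{1+c}, and Y^{1+c} are all integrable, one has E[X·Y] · (E[Y])^c ≤ C · ( E[X·Y^{1+c}] + E[X] · E[Y^{1+c}] ). -/
/-!
Pointwise, `y * t ^ c ≤ y ^ (1 + c) + t ^ (1 + c)` for `y, t ≥ 0` (bound `t ^ c` by `y ^ c` or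
`y` by `t`, whichever is larger). Taking `t = E[Y]`, multiplying by `X` and integrating gives
`E[XY] (E Y)^c ≤ E[X Y^{1+c}] + E[X] (E Y)^{1+c}`, and Jensen's inequality for the convex map
`x ↦ x ^ (1 + c)` bounds `(E Y)^{1+c}` by `E[Y^{1+c}]`. So the constant `C = 1` works.
-/

open MeasureTheory

lemma mul_rpow_le_rpow_one_add_add_rpow_one_add {y t c : ℝ} (hy : 0 ≤ y) (ht : 0 ≤ t)
    (hc : 0 ≤ c) : y * t ^ c ≤ y ^ (1 + c) + t ^ (1 + c) := by
  have h1c : (1 : ℝ) + c ≠ 0 := by positivity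
  rcases le_total t y with h | h
  · have : y * t ^ c ≤ y ^ (1 + c) := by
      rw [Real.rpow_add' hy h1c, Real.rpow_one]
      gcongr
    linarith [Real.rpow_nonneg ht (1 + c)]
  · have : y * t ^ c ≤ t ^ (1 + c) := by
      rw [Real.rpow_add' ht h1c, Real.rpow_one]
      gcongr
    linarith [Real.rpow_nonneg hy (1 + c)]

lemma integral_mul_mul_rpow_le {Ω : Type*} [MeasurableSpace Ω] {μ : Measure Ω} {X Y : Ω → ℝ}
    {c t : ℝ} (hc : 0 ≤ c) (ht : 0 ≤ t) (hX : ∀ ω, 0 ≤ X ω) (hY : ∀ ω, 0 ≤ Y ω)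
    (hXi : Integrable X μ) (hXYi : Integrable (fun ω => X ω * Y ω) μ)
    (hXYci : Integrable (fun ω => X ω * Y ω ^ (1 + c)) μ) :
    (∫ ω, X ω * Y ω ∂μ) * t ^ c
      ≤ (∫ ω, X ω * Y ω ^ (1 + c) ∂μ) + (∫ ω, X ω ∂μ) * t ^ (1 + c) := by
  have hrhs := hXYci.add (hXi.mul_const (t ^ (1 + c)))
  rw [← integral_mul_const, ← integral_mul_const, ← integral_add hXYci (hXi.mul_const _)]
  refine integral_mono (hXYi.mul_const _) hrhs fun ω => ?_
  have := mul_le_mul_of_nonneg_left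
    (mul_rpow_le_rpow_one_add_add_rpow_one_add (hY ω) ht hc) (hX ω)
  simpa only [Pi.add_apply, mul_add, mul_assoc] using this

lemma rpow_integral_le_integral_rpow {Ω : Type*} [MeasurableSpace Ω] {μ : Measure Ω}
    [IsProbabilityMeasure μ] {Y : Ω → ℝ} {p : ℝ} (hp : 1 ≤ p) (hY : ∀ ω, 0 ≤ Y ω)
    (hYi : Integrable Y μ) (hYpi : Integrable (fun ω => Y ω ^ p) μ) :
    (∫ ω, Y ω ∂μ) ^ p ≤ ∫ ω, Y ω ^ p ∂μ :=
  (convexOn_rpow hp).map_integral_le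
    (Real.continuous_rpow_const (zero_le_one.trans hp)).continuousOn isClosed_Ici
    (Filter.Eventually.of_forall hY) hYi hYpi

/-- **A Hölder/Young-type inequality for nonnegative random variables.**  There is a
universal constant `C > 0` such that for every probability space, every `c ∈ (0, 1)`, and
all nonnegative jointly distributed random variables `X, Y` with `X`, `Y`, `X·Y`,
`X·Y^{1+c}`, `Y^{1+c}` integrable, one has
`E[X·Y]·(E Y)^c ≤ C·(E[X·Y^{1+c}] + E[X]·E[Y^{1+c}])`. -/
theorem nonneg_product_moment_bound :
    ∃ C : ℝ, 0 < C ∧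
      ∀ (Ω : Type) (mΩ : MeasurableSpace Ω) (μ : Measure Ω), IsProbabilityMeasure μ →
      ∀ c : ℝ, 0 < c → c < 1 →
      ∀ X Y : Ω → ℝ, (∀ ω, 0 ≤ X ω) → (∀ ω, 0 ≤ Y ω) →
        Integrable X μ → Integrable Y μ →
        Integrable (fun ω => X ω * Y ω) μ →
        Integrable (fun ω => X ω * Y ω ^ (1 + c)) μ →
        Integrable (fun ω => Y ω ^ (1 + c)) μ →
        (∫ ω, X ω * Y ω ∂μ) * (∫ ω, Y ω ∂μ) ^ c
          ≤ C * ((∫ ω, X ω * Y ω ^ (1 + c) ∂μ)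
              + (∫ ω, X ω ∂μ) * (∫ ω, Y ω ^ (1 + c) ∂μ)) := by
  refine ⟨1, one_pos, ?_⟩
  intro Ω mΩ μ _ c hc _ X Y hX hY hXi hYi hXYi hXYci hYci
  rw [one_mul]
  calc (∫ ω, X ω * Y ω ∂μ) * (∫ ω, Y ω ∂μ) ^ c
      ≤ (∫ ω, X ω * Y ω ^ (1 + c) ∂μ) + (∫ ω, X ω ∂μ) * (∫ ω, Y ω ∂μ) ^ (1 + c) :=
        integral_mul_mul_rpow_le hc.le (integral_nonneg hY) hX hY hXi hXYi hXYci
    _ ≤ (∫ ω, X ω * Y ω ^ (1 + c) ∂μ) + (∫ ω, X ω ∂μ) * (∫ ω, Y ω ^ (1 + c) ∂μ) := by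
      gcongr
      · exact integral_nonneg hX
      · exact rpow_integral_le_integral_rpow (by linarith) hY hYi hYci
end

section
/- For every even integer p ≥ 2 there is a constant C_p > 0 such that for all x₁, Δ ∈ ℝ, setting x₂ := ( sgn(x₁)·|x₁|^{1/(p−1)} + Δ )^{p−1} (an ordinary (p−1)-st power of a real number), one has B_p(x₁, x₂) ≤ C_p · ( Δ² · |x₁|^{(p−2)/(p−1)} + |Δ|^p ). -/
open MeasureTheory

/-- `f_p(x) = ((p−1)/p)·|x|^{p/(p−1)}`. -/
noncomputable def fP (p : ℕ) (x : ℝ) : ℝ :=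
  (((p : ℝ) - 1) / p) * |x| ^ ((p : ℝ) / ((p : ℝ) - 1))

/-- `f_p'(c) = sgn(c)·|c|^{1/(p−1)}`. -/
noncomputable def fP' (p : ℕ) (c : ℝ) : ℝ :=
  Real.sign c * |c| ^ (1 / ((p : ℝ) - 1))

/-- The Bregman divergence associated with `f_p`:
`B_p(x, c) = f_p(x) − f_p(c) − f_p'(c)·(x − c)`. -/
noncomputable def bregman (p : ℕ) (x c : ℝ) : ℝ :=
  fP p x - fP p c - fP' p c * (x - c)

lemma sign_mul_abs' (x : ℝ) : Real.sign x * |x| = x := by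
  rcases lt_trichotomy x 0 with h | h | h
  · rw [Real.sign_of_neg h, abs_of_neg h]; ring
  · simp [h]
  · rw [Real.sign_of_pos h, abs_of_pos h]; ring

lemma odd_sign_pow (n : ℕ) (hn : Odd n) (x : ℝ) : Real.sign x ^ n = Real.sign x := by
  rcases lt_trichotomy x 0 with h | h | h
  · rw [Real.sign_of_neg h, hn.neg_one_pow]
  · simp [h, Real.sign_zero, zero_pow hn.pos.ne']
  · rw [Real.sign_of_pos h, one_pow]

lemma abs_sign_mul (x a : ℝ) (ha : 0 ≤ a) (h0 : x = 0 → a = 0) :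
    |Real.sign x * a| = a := by
  rcases lt_trichotomy x 0 with h | h | h
  · rw [Real.sign_of_neg h, abs_mul, abs_neg, abs_one, one_mul, abs_of_nonneg ha]
  · simp [h, h0 h]
  · rw [Real.sign_of_pos h, one_mul, abs_of_nonneg ha]

lemma aux_prod_le (a b : ℝ) (ha : 0 ≤ a) (hb : 0 ≤ b) (k m : ℕ) (hk : k ≤ m) :
    a ^ k * b ^ (m - k) ≤ a ^ m + b ^ m := by
  rcases le_total a b with h | h
  · calc a ^ k * b ^ (m - k) ≤ b ^ k * b ^ (m - k) := by gcongr
      _ = b ^ m := by rw [← pow_add]; congr 1; omega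
      _ ≤ a ^ m + b ^ m := le_add_of_nonneg_left (by positivity)
  · calc a ^ k * b ^ (m - k) ≤ a ^ k * a ^ (m - k) := by gcongr
      _ = a ^ m := by rw [← pow_add]; congr 1; omega
      _ ≤ a ^ m + b ^ m := le_add_of_nonneg_right (by positivity)

lemma key_sum (m : ℕ) (u d : ℝ) :
    (u + d) ^ (m + 2) - u ^ (m + 2) - (m + 2 : ℝ) * u ^ (m + 1) * d
      ≤ 2 ^ (m + 2) * (d ^ 2 * |u| ^ m + |d| ^ (m + 2)) := by
  have h := add_pow u d (m + 2)
  rw [Finset.sum_range_succ, Finset.sum_range_succ] at h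
  have h1 : (m + 2).choose (m + 1) = m + 2 := Nat.choose_succ_self_right (m + 1)
  have h2 : m + 2 - (m + 1) = 1 := by omega
  have h3 : m + 2 - (m + 2) = 0 := by omega
  rw [h1, h2, h3, Nat.choose_self] at h
  have hS : (u + d) ^ (m + 2) - u ^ (m + 2) - (m + 2 : ℝ) * u ^ (m + 1) * d
      = ∑ k ∈ Finset.range (m + 1), u ^ k * d ^ (m + 2 - k) * ((m + 2).choose k : ℝ) := by
    rw [h]; push_cast; ring
  rw [hS]
  have X0 : 0 ≤ d ^ 2 * |u| ^ m + |d| ^ (m + 2) := by positivity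
  calc ∑ k ∈ Finset.range (m + 1), u ^ k * d ^ (m + 2 - k) * ((m + 2).choose k : ℝ)
      ≤ ∑ k ∈ Finset.range (m + 1),
          ((m + 2).choose k : ℝ) * (d ^ 2 * |u| ^ m + |d| ^ (m + 2)) := by
        apply Finset.sum_le_sum
        intro k hk
        have hkm : k ≤ m := by
          simpa using Nat.lt_succ_iff.mp (Finset.mem_range.mp hk)
        have e1 : u ^ k * d ^ (m + 2 - k) ≤ |u| ^ k * |d| ^ (m + 2 - k) := by
          calc u ^ k * d ^ (m + 2 - k) ≤ |u ^ k * d ^ (m + 2 - k)| := le_abs_self _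
            _ = |u| ^ k * |d| ^ (m + 2 - k) := by rw [abs_mul, abs_pow, abs_pow]
        have e2 : |u| ^ k * |d| ^ (m + 2 - k) = (|u| ^ k * |d| ^ (m - k)) * d ^ 2 := by
          have : m + 2 - k = (m - k) + 2 := by omega
          rw [this, pow_add, sq_abs]; ring
        have e3 : |u| ^ k * |d| ^ (m - k) ≤ |u| ^ m + |d| ^ m :=
          aux_prod_le _ _ (abs_nonneg u) (abs_nonneg d) k m hkm
        have e4 : u ^ k * d ^ (m + 2 - k) ≤ d ^ 2 * |u| ^ m + |d| ^ (m + 2) := by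
          have hd2 : (0:ℝ) ≤ d ^ 2 := sq_nonneg d
          have : (|u| ^ k * |d| ^ (m - k)) * d ^ 2 ≤ (|u| ^ m + |d| ^ m) * d ^ 2 := by
            exact mul_le_mul_of_nonneg_right e3 hd2
          have e5 : (|u| ^ m + |d| ^ m) * d ^ 2 = d ^ 2 * |u| ^ m + |d| ^ (m + 2) := by
            rw [pow_add, ← sq_abs d]; ring
          calc u ^ k * d ^ (m + 2 - k) ≤ |u| ^ k * |d| ^ (m + 2 - k) := e1
            _ = (|u| ^ k * |d| ^ (m - k)) * d ^ 2 := e2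
            _ ≤ (|u| ^ m + |d| ^ m) * d ^ 2 := this
            _ = d ^ 2 * |u| ^ m + |d| ^ (m + 2) := e5
        calc u ^ k * d ^ (m + 2 - k) * ((m + 2).choose k : ℝ)
            = ((m + 2).choose k : ℝ) * (u ^ k * d ^ (m + 2 - k)) := by ring
          _ ≤ ((m + 2).choose k : ℝ) * (d ^ 2 * |u| ^ m + |d| ^ (m + 2)) := by
              exact mul_le_mul_of_nonneg_left e4 (by positivity)
    _ = (∑ k ∈ Finset.range (m + 1), ((m + 2).choose k : ℝ))
          * (d ^ 2 * |u| ^ m + |d| ^ (m + 2)) := by rw [← Finset.sum_mul]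
    _ ≤ 2 ^ (m + 2) * (d ^ 2 * |u| ^ m + |d| ^ (m + 2)) := by
        apply mul_le_mul_of_nonneg_right _ X0
        have : (∑ k ∈ Finset.range (m + 1), (m + 2).choose k)
            ≤ ∑ k ∈ Finset.range (m + 3), (m + 2).choose k :=
          Finset.sum_le_sum_of_subset (Finset.range_subset_range.mpr (by omega))
        rw [Nat.sum_range_choose] at this
        calc (∑ k ∈ Finset.range (m + 1), ((m + 2).choose k : ℝ))
            = ((∑ k ∈ Finset.range (m + 1), (m + 2).choose k : ℕ) : ℝ) := by push_cast; rfl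
          _ ≤ ((2 ^ (m + 2) : ℕ) : ℝ) := by exact_mod_cast this
          _ = 2 ^ (m + 2) := by push_cast; rfl

/-- **Divergence bound for the mirror descent update.**  For every even `p ≥ 2` there is
`C_p > 0` such that for all `x₁, Δ ∈ ℝ`, setting
`x₂ = (sgn(x₁)·|x₁|^{1/(p−1)} + Δ)^{p−1}`, one has
`B_p(x₁, x₂) ≤ C_p·(Δ²·|x₁|^{(p−2)/(p−1)} + |Δ|^p)`. -/
theorem bregman_update_divergence_bound (p : ℕ) (hpe : Even p) (hp : 2 ≤ p) :
    ∃ C : ℝ, 0 < C ∧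
      ∀ x₁ Δ : ℝ,
        bregman p x₁ ((Real.sign x₁ * |x₁| ^ (1 / ((p : ℝ) - 1)) + Δ) ^ (p - 1))
          ≤ C * (Δ ^ 2 * |x₁| ^ (((p : ℝ) - 2) / ((p : ℝ) - 1)) + |Δ| ^ p) := by
  have hpR2 : (2 : ℝ) ≤ (p : ℝ) := by exact_mod_cast hp
  have hne : (p : ℝ) - 1 ≠ 0 := by linarith
  have hpne : (p : ℝ) ≠ 0 := by linarith
  have hodd : Odd (p - 1) := Nat.Even.sub_odd (by omega) hpe odd_one
  have hcast : ((p - 1 : ℕ) : ℝ) = (p : ℝ) - 1 := by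
    rw [Nat.cast_sub (by omega : 1 ≤ p)]; norm_num
  refine ⟨2 ^ p, by positivity, fun x₁ Δ => ?_⟩
  set r : ℝ := 1 / ((p : ℝ) - 1) with hr
  set u : ℝ := Real.sign x₁ * |x₁| ^ r with hu
  set v : ℝ := u + Δ with hv
  -- basic facts
  have habsu : |u| = |x₁| ^ r := by
    apply abs_sign_mul
    · exact Real.rpow_nonneg (abs_nonneg x₁) r
    · intro h
      have hrne : r ≠ 0 := by rw [hr]; exact one_div_ne_zero hne
      rw [h]; simp [Real.zero_rpow hrne]
  have hrpow : (|x₁| ^ r) ^ (p - 1) = |x₁| := by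
    rw [← Real.rpow_natCast (|x₁| ^ r) (p - 1), ← Real.rpow_mul (abs_nonneg x₁),
      hcast, hr, one_div_mul_cancel hne, Real.rpow_one]
  have hx₁ : u ^ (p - 1) = x₁ := by
    rw [hu, mul_pow, odd_sign_pow _ hodd, hrpow, sign_mul_abs']
  -- |x₁| ^ (p/(p-1)) = u ^ p
  have habs1 : |x₁| = |u| ^ (p - 1) := by rw [habsu, hrpow]
  have hupow : |x₁| ^ ((p : ℝ) / ((p : ℝ) - 1)) = u ^ p := by
    rw [habs1, ← Real.rpow_natCast |u| (p - 1), ← Real.rpow_mul (abs_nonneg u), hcast]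
    rw [show ((p : ℝ) - 1) * ((p : ℝ) / ((p : ℝ) - 1)) = (p : ℝ) by field_simp,
      Real.rpow_natCast, hpe.pow_abs]
  -- x₂ facts
  set x₂ : ℝ := v ^ (p - 1) with hx₂
  have habs2 : |x₂| = |v| ^ (p - 1) := by rw [hx₂, abs_pow]
  have hvpow : |x₂| ^ ((p : ℝ) / ((p : ℝ) - 1)) = v ^ p := by
    rw [habs2, ← Real.rpow_natCast |v| (p - 1), ← Real.rpow_mul (abs_nonneg v), hcast]
    rw [show ((p : ℝ) - 1) * ((p : ℝ) / ((p : ℝ) - 1)) = (p : ℝ) by field_simp,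
      Real.rpow_natCast, hpe.pow_abs]
  have hsign2 : Real.sign x₂ = Real.sign v := by
    rcases lt_trichotomy v 0 with h | h | h
    · rw [Real.sign_of_neg h, Real.sign_of_neg (by rw [hx₂]; exact hodd.pow_neg h)]
    · rw [hx₂, h]; simp [zero_pow hodd.pos.ne', Real.sign_zero]
    · rw [Real.sign_of_pos h, Real.sign_of_pos (by rw [hx₂]; positivity)]
  have hderiv : fP' p x₂ = v := by
    rw [fP', habs2, ← Real.rpow_natCast |v| (p - 1), ← Real.rpow_mul (abs_nonneg v),
      hcast, mul_one_div, div_self hne, Real.rpow_one, hsign2, sign_mul_abs']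
  -- the x₁ exponent
  have hxexp : |x₁| ^ (((p : ℝ) - 2) / ((p : ℝ) - 1)) = |u| ^ (p - 2) := by
    rw [habs1, ← Real.rpow_natCast |u| (p - 1), ← Real.rpow_mul (abs_nonneg u), hcast]
    rw [show ((p : ℝ) - 1) * (((p : ℝ) - 2) / ((p : ℝ) - 1)) = (p : ℝ) - 2 by field_simp]
    rw [show ((p : ℝ) - 2) = ((p - 2 : ℕ) : ℝ) by
      rw [Nat.cast_sub hp]; norm_num, Real.rpow_natCast]
  -- rewrite bregman
  obtain ⟨m, rfl⟩ : ∃ m, p = m + 2 := ⟨p - 2, by omega⟩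
  have hmsub : m + 2 - 1 = m + 1 := by omega
  have hmsub2 : m + 2 - 2 = m := by omega
  rw [bregman, fP, fP, hupow, hvpow, hderiv, hxexp, hmsub2, ← hx₁, hx₂, hmsub]
  have hB : (((m + 2 : ℕ) : ℝ) - 1) / ((m + 2 : ℕ) : ℝ) * u ^ (m + 2)
      - (((m + 2 : ℕ) : ℝ) - 1) / ((m + 2 : ℕ) : ℝ) * v ^ (m + 2)
      - v * (u ^ (m + 1) - v ^ (m + 1))
      = (1 / ((m : ℝ) + 2)) * ((u + Δ) ^ (m + 2) - u ^ (m + 2)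
          - ((m : ℝ) + 2) * u ^ (m + 1) * Δ) := by
    rw [hv]
    push_cast
    field_simp
    ring
  rw [hB]
  have hk := key_sum m u Δ
  have hX0 : 0 ≤ Δ ^ 2 * |u| ^ m + |Δ| ^ (m + 2) := by positivity
  have hB0 : (0 : ℝ) ≤ 2 ^ (m + 2) * (Δ ^ 2 * |u| ^ m + |Δ| ^ (m + 2)) := by positivity
  have hm2 : (0 : ℝ) < (m : ℝ) + 2 := by positivity
  calc (1 / ((m : ℝ) + 2)) * ((u + Δ) ^ (m + 2) - u ^ (m + 2)
          - ((m : ℝ) + 2) * u ^ (m + 1) * Δ)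
      ≤ (1 / ((m : ℝ) + 2)) * (2 ^ (m + 2) * (Δ ^ 2 * |u| ^ m + |Δ| ^ (m + 2))) := by
        exact mul_le_mul_of_nonneg_left hk (by positivity)
    _ ≤ 1 * (2 ^ (m + 2) * (Δ ^ 2 * |u| ^ m + |Δ| ^ (m + 2))) := by
        exact mul_le_mul_of_nonneg_right (by rw [div_le_one hm2]; linarith) hB0
    _ = 2 ^ (m + 2) * (Δ ^ 2 * |u| ^ m + |Δ| ^ (m + 2)) := one_mul _
end

section
/- For every even integer p ≥ 2 and every real K ≥ 1 there exist constants C > 0 and c₀ > 0 with the following property. Let A ∈ ℝ^{n×m}, let D ≥ 0 be a real number with D ≤ c₀·‖A‖_p^p, let x ∈ ℝⁿ and y ∈ ℝᵐ satisfy ‖x‖_p = ‖y‖_p and ‖A − xy^⊤‖_p^p ≤ K·D, and let u₀ ∈ ℝⁿ and v₀ ∈ ℝᵐ satisfy ‖A − u₀v₀^⊤‖_p^p ≤ K·D. Then there exist u ∈ ℝⁿ and v ∈ ℝᵐ with uv^⊤ = u₀v₀^⊤ such that ‖u − x‖_p^p · ‖x‖_p^p ≤ C·D and ‖v − y‖_p^p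 · ‖x‖_p^p ≤ C·D. -/
/-!
Write `E = u₀v₀ᵀ - xyᵀ`. Going through `A`, `‖E‖_p^p = O(K·D)`, and since `A` is close to `xyᵀ`
while `D` is small compared with `‖A‖_p^p`, also `‖E‖_p^p` is small compared with `‖x‖_p^{2p}`.
For even `p` the functional `φ_y(w) = ∑ w_j y_j^{p-1} / ‖y‖_p^p` satisfies `φ_y(y) = 1` and, by
Hölder, `|φ_y(w)| ≤ ‖w‖_p / ‖y‖_p`. Take `u = t·u₀` and `v = v₀ / t` with `t = φ_y(v₀)`: applying
`φ_y` to the `i`-th row of `E` gives `u_i - x_i`, which bounds `‖u - x‖_p^p ‖y‖_p^p` by `‖E‖_p^p`.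
So `u` is close to `x`, whence `‖u‖_p ≥ ‖x‖_p / 2` and `t ≠ 0`, and the bound on `v - y` follows
from `u(v - y)ᵀ = (uvᵀ - xyᵀ) + (x - u)yᵀ`. Triangle inequalities are used in the form
`|a + b|^p ≤ 2^(p-1) (|a|^p + |b|^p)`, which is where the powers of `2` in the constants come from.
-/

open Finset

variable {ι κ : Type*} [Fintype ι] [Fintype κ]

lemma pow_abs_add_le (a b : ℝ) (p : ℕ) : |a + b| ^ p ≤ 2 ^ (p - 1) * (|a| ^ p + |b| ^ p) :=
  (pow_le_pow_left₀ (abs_nonneg _) (abs_add_le a b) p).trans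
    (add_pow_le (abs_nonneg a) (abs_nonneg b) p)

lemma sum_pow_abs_add_le (f g : ι → ℝ) (p : ℕ) :
    ∑ i, |f i + g i| ^ p ≤ 2 ^ (p - 1) * (∑ i, |f i| ^ p + ∑ i, |g i| ^ p) := by
  rw [← sum_add_distrib, mul_sum]
  exact sum_le_sum fun i _ ↦ pow_abs_add_le (f i) (g i) p

lemma sum_sum_pow_abs_add_le (f g : ι → κ → ℝ) (p : ℕ) :
    ∑ i, ∑ j, |f i j + g i j| ^ p ≤
      2 ^ (p - 1) * (∑ i, ∑ j, |f i j| ^ p + ∑ i, ∑ j, |g i j| ^ p) := by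
  rw [← sum_add_distrib, mul_sum]
  exact sum_le_sum fun i _ ↦ sum_pow_abs_add_le (f i) (g i) p

lemma sum_sum_pow_abs_mul (x : ι → ℝ) (y : κ → ℝ) (p : ℕ) :
    ∑ i, ∑ j, |x i * y j| ^ p = (∑ i, |x i| ^ p) * ∑ j, |y j| ^ p := by
  simp only [abs_mul, mul_pow, sum_mul_sum]

lemma abs_sum_mul_pow_pred_pow_le {p : ℕ} (hp : 1 < p) (f g : ι → ℝ) :
    |∑ i, f i * g i ^ (p - 1)| ^ p ≤ (∑ i, |f i| ^ p) * (∑ i, |g i| ^ p) ^ (p - 1) := by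
  have hp' : (1 : ℝ) < p := by exact_mod_cast hp
  have hpq := Real.HolderConjugate.conjExponent hp'
  set q := Real.conjExponent (p : ℝ)
  have hg : ∀ i, (|g i| ^ (p - 1)) ^ q = |g i| ^ p := fun i ↦ by
    rw [← Real.rpow_natCast, ← Real.rpow_mul (abs_nonneg _), Nat.cast_sub hp.le, Nat.cast_one,
      hpq.sub_one_mul_conj, Real.rpow_natCast]
  have holder := Real.inner_le_Lp_mul_Lq_of_nonneg univ hpq (f := fun i ↦ |f i|)
    (g := fun i ↦ |g i| ^ (p - 1)) (fun i _ ↦ abs_nonneg _) (fun i _ ↦ by positivity)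
  simp only [hg, Real.rpow_natCast] at holder
  calc |∑ i, f i * g i ^ (p - 1)| ^ p
      ≤ (∑ i, |f i| * |g i| ^ (p - 1)) ^ p := by
        gcongr
        refine (abs_sum_le_sum_abs _ _).trans_eq ?_
        simp only [abs_mul, abs_pow]
    _ ≤ ((∑ i, |f i| ^ p) ^ (1 / (p : ℝ)) * (∑ i, |g i| ^ p) ^ (1 / q)) ^ p :=
        pow_le_pow_left₀ (by positivity) holder p
    _ = (∑ i, |f i| ^ p) * (∑ i, |g i| ^ p) ^ (p - 1) := by
        rw [mul_pow, one_div, Real.rpow_inv_natCast_pow (by positivity) (by omega),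
          ← Real.rpow_natCast _ p, ← Real.rpow_mul (by positivity), ← Real.rpow_natCast]
        congr 2
        rw [Nat.cast_sub hp.le, Nat.cast_one, one_div, ← hpq.one_sub_inv]
        field_simp

/-- The norming functional `φ_y` of `y` in `ℓ_p` (for even `p`), evaluated at `w`. -/
noncomputable def normingCoeff (p : ℕ) (y w : κ → ℝ) : ℝ :=
  (∑ j, w j * y j ^ (p - 1)) / ∑ j, |y j| ^ p

lemma pow_abs_normingCoeff_mul_le {p : ℕ} (hp : 1 < p) (y w : κ → ℝ) :
    |normingCoeff p y w| ^ p * ∑ j, |y j| ^ p ≤ ∑ j, |w j| ^ p := by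
  set S := ∑ j, |y j| ^ p
  rcases (show 0 ≤ S by positivity).eq_or_lt with hS | hS
  · rw [← hS, mul_zero]; positivity
  have hSp : S ^ p = S ^ (p - 1) * S := by rw [← pow_succ, Nat.sub_add_cancel hp.le]
  rw [normingCoeff, abs_div, abs_of_pos hS, div_pow, hSp, div_mul_eq_mul_div,
    mul_div_mul_right _ _ hS.ne', div_le_iff₀ (by positivity)]
  exact abs_sum_mul_pow_pred_pow_le hp w y

lemma normingCoeff_mul_sub_mul {p : ℕ} (hpe : Even p) (hp : p ≠ 0) {y : κ → ℝ}
    (hy : ∑ j, |y j| ^ p ≠ 0) (a b : ℝ) (v : κ → ℝ) :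
    normingCoeff p y (fun j ↦ a * v j - b * y j) = a * normingCoeff p y v - b := by
  have hyy : ∀ j, y j * y j ^ (p - 1) = |y j| ^ p := fun j ↦ by
    rw [hpe.pow_abs, ← pow_succ', Nat.sub_add_cancel (Nat.one_le_iff_ne_zero.mpr hp)]
  simp only [normingCoeff, sub_mul, mul_assoc, hyy, sum_sub_distrib, ← mul_sum]
  field_simp

lemma sum_pow_abs_mul_normingCoeff_sub_le {p : ℕ} (hpe : Even p) (hp : 2 ≤ p)
    (x u₀ : ι → ℝ) {y : κ → ℝ} (hy : ∑ j, |y j| ^ p ≠ 0) (v₀ : κ → ℝ) :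
    (∑ i, |u₀ i * normingCoeff p y v₀ - x i| ^ p) * ∑ j, |y j| ^ p ≤
      ∑ i, ∑ j, |u₀ i * v₀ j - x i * y j| ^ p := by
  rw [sum_mul]
  refine sum_le_sum fun i _ ↦ ?_
  rw [← normingCoeff_mul_sub_mul hpe (by omega) hy]
  exact pow_abs_normingCoeff_mul_le (by omega) y _

lemma two_pow_pred_mul_add_self {p : ℕ} (hp : p ≠ 0) (a : ℝ) :
    2 ^ (p - 1) * (a + a) = 2 ^ p * a := by
  rw [← two_mul, ← mul_assoc, ← pow_succ, Nat.sub_add_cancel (Nat.one_le_iff_ne_zero.mpr hp)]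

lemma le_two_pow_mul_of_le_two_pow_pred_mul_add {p : ℕ} (hp : p ≠ 0) {a b c : ℝ}
    (h : a ≤ 2 ^ (p - 1) * (b + c)) (hb : 2 ^ p * b ≤ a) : a ≤ 2 ^ p * c := by
  rw [← Nat.sub_add_cancel (Nat.one_le_iff_ne_zero.mpr hp), pow_succ] at hb ⊢
  linarith

lemma sum_pow_abs_mul_sum_pow_abs_sub_le (u x : ι → ℝ) (v y : κ → ℝ) (p : ℕ) :
    (∑ i, |u i| ^ p) * ∑ j, |v j - y j| ^ p ≤
      2 ^ (p - 1) * (∑ i, ∑ j, |u i * v j - x i * y j| ^ p +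
        (∑ i, |u i - x i| ^ p) * ∑ j, |y j| ^ p) := by
  rw [← sum_sum_pow_abs_mul, ← sum_sum_pow_abs_mul]
  have h := sum_sum_pow_abs_add_le (fun i j ↦ u i * v j - x i * y j)
    (fun i j ↦ -((u i - x i) * y j)) p
  simp only [abs_neg] at h
  convert h using 5 with i _ j _
  ring

theorem exists_rescaling_near {p : ℕ} (hpe : Even p) (hp : 2 ≤ p) (x u₀ : ι → ℝ)
    (y v₀ : κ → ℝ) (hxy : ∑ j, |y j| ^ p = ∑ i, |x i| ^ p)
    (hE : 2 ^ p * ∑ i, ∑ j, |u₀ i * v₀ j - x i * y j| ^ p ≤ (∑ i, |x i| ^ p) ^ 2) :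
    ∃ (u : ι → ℝ) (v : κ → ℝ), (∀ i j, u i * v j = u₀ i * v₀ j) ∧
      (∑ i, |u i - x i| ^ p) * ∑ i, |x i| ^ p ≤ ∑ i, ∑ j, |u₀ i * v₀ j - x i * y j| ^ p ∧
      (∑ j, |v j - y j| ^ p) * ∑ i, |x i| ^ p ≤
        4 ^ p * ∑ i, ∑ j, |u₀ i * v₀ j - x i * y j| ^ p := by
  set Sx := ∑ i, |x i| ^ p
  set E := ∑ i, ∑ j, |u₀ i * v₀ j - x i * y j| ^ p
  rcases (show 0 ≤ Sx by positivity).eq_or_lt with hSx | hSx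
  · exact ⟨u₀, v₀, fun _ _ ↦ rfl, by rw [← hSx, mul_zero]; positivity,
      by rw [← hSx, mul_zero]; positivity⟩
  set t := normingCoeff p y v₀
  set u := fun i ↦ u₀ i * t
  have hu : (∑ i, |u i - x i| ^ p) * Sx ≤ E :=
    hxy ▸ sum_pow_abs_mul_normingCoeff_sub_le hpe hp x u₀ (hxy ▸ hSx.ne') v₀
  have hSu : Sx ≤ 2 ^ p * ∑ i, |u i| ^ p := by
    refine le_two_pow_mul_of_le_two_pow_pred_mul_add (by omega)
      (by simpa using sum_pow_abs_add_le (fun i ↦ x i - u i) u p) ?_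
    refine le_of_mul_le_mul_right ?_ hSx
    simp only [abs_sub_comm (x _)]
    calc 2 ^ p * (∑ i, |u i - x i| ^ p) * Sx = 2 ^ p * ((∑ i, |u i - x i| ^ p) * Sx) :=
          mul_assoc _ _ _
      _ ≤ 2 ^ p * E := by gcongr
      _ ≤ Sx * Sx := (sq Sx).subst hE
  have ht : t ≠ 0 := by
    rintro ht
    simp only [u, ht, mul_zero, abs_zero, zero_pow (show p ≠ 0 by omega), sum_const_zero] at hSu
    linarith
  set v := fun j ↦ t⁻¹ * v₀ j
  have huv : ∀ i j, u i * v j = u₀ i * v₀ j := fun i j ↦ by simp only [u, v]; field_simp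
  have hv : (∑ i, |u i| ^ p) * ∑ j, |v j - y j| ^ p ≤ 2 ^ p * E := by
    have h := sum_pow_abs_mul_sum_pow_abs_sub_le u x v y p
    rw [hxy] at h
    simp only [huv] at h
    calc _ ≤ 2 ^ (p - 1) * (E + E) := h.trans (by gcongr)
      _ = 2 ^ p * E := two_pow_pred_mul_add_self (by omega) E
  refine ⟨u, v, huv, hu, ?_⟩
  calc (∑ j, |v j - y j| ^ p) * Sx ≤ (∑ j, |v j - y j| ^ p) * (2 ^ p * ∑ i, |u i| ^ p) := by
        gcongr
    _ = 2 ^ p * ((∑ i, |u i| ^ p) * ∑ j, |v j - y j| ^ p) := by ring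
    _ ≤ 2 ^ p * (2 ^ p * E) := by gcongr
    _ = 4 ^ p * E := by rw [← mul_assoc, ← mul_pow]; norm_num

lemma sum_sum_pow_abs_le_of_sub_le {p : ℕ} (hp : p ≠ 0) (A B : Matrix ι κ ℝ)
    (h : 2 ^ p * ∑ i, ∑ j, |A i j - B i j| ^ p ≤ ∑ i, ∑ j, |A i j| ^ p) :
    ∑ i, ∑ j, |A i j| ^ p ≤ 2 ^ p * ∑ i, ∑ j, |B i j| ^ p :=
  le_two_pow_mul_of_le_two_pow_pred_mul_add hp
    (by simpa using sum_sum_pow_abs_add_le (A - B) B p) h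

lemma sum_sum_pow_abs_sub_le (A B C : Matrix ι κ ℝ) (p : ℕ) :
    ∑ i, ∑ j, |C i j - B i j| ^ p ≤
      2 ^ (p - 1) * (∑ i, ∑ j, |A i j - B i j| ^ p + ∑ i, ∑ j, |A i j - C i j| ^ p) := by
  have h := sum_sum_pow_abs_add_le (A - B) (C - A) p
  simp only [Matrix.sub_apply, sub_add_sub_cancel', abs_sub_comm (C _ _) (A _ _)] at h
  exact h

theorem sum_sum_pow_abs_mul_sub_mul_le {p : ℕ} (hp : p ≠ 0) (A : Matrix ι κ ℝ)
    (x u₀ : ι → ℝ) (y v₀ : κ → ℝ) {δ : ℝ} (hyx : ∑ j, |y j| ^ p = ∑ i, |x i| ^ p)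
    (hA : 8 ^ p * δ ≤ ∑ i, ∑ j, |A i j| ^ p)
    (hAxy : ∑ i, ∑ j, |A i j - x i * y j| ^ p ≤ δ)
    (hAuv : ∑ i, ∑ j, |A i j - u₀ i * v₀ j| ^ p ≤ δ) :
    ∑ i, ∑ j, |u₀ i * v₀ j - x i * y j| ^ p ≤ 2 ^ p * δ ∧
      2 ^ p * ∑ i, ∑ j, |u₀ i * v₀ j - x i * y j| ^ p ≤ (∑ i, |x i| ^ p) ^ 2 := by
  have hδ : 0 ≤ δ := le_trans (by positivity) hAxy
  have h8 : (8 : ℝ) ^ p = 2 ^ p * 2 ^ p * 2 ^ p := by rw [← mul_pow, ← mul_pow]; norm_num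
  have hE : ∑ i, ∑ j, |u₀ i * v₀ j - x i * y j| ^ p ≤ 2 ^ p * δ := by
    calc _ ≤ 2 ^ (p - 1) * (δ + δ) :=
          (sum_sum_pow_abs_sub_le A (fun i j ↦ x i * y j) (fun i j ↦ u₀ i * v₀ j) p).trans
            (by gcongr)
      _ = 2 ^ p * δ := two_pow_pred_mul_add_self hp δ
  have hAx : ∑ i, ∑ j, |A i j| ^ p ≤ 2 ^ p * (∑ i, |x i| ^ p) ^ 2 := by
    have h := sum_sum_pow_abs_le_of_sub_le hp A (fun i j ↦ x i * y j) <| by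
      calc _ ≤ 2 ^ p * δ := by gcongr
        _ ≤ 8 ^ p * δ := by gcongr; norm_num
        _ ≤ _ := hA
    rwa [sum_sum_pow_abs_mul, hyx, ← sq] at h
  refine ⟨hE, le_of_mul_le_mul_left ?_ (by positivity : (0 : ℝ) < 2 ^ p)⟩
  calc _ ≤ 2 ^ p * (2 ^ p * (2 ^ p * δ)) := by gcongr
    _ = 8 ^ p * δ := by rw [h8]; ring
    _ ≤ _ := hA.trans hAx

/-- **Nearby optimal solutions for rank-one ℓ_p low-rank approximation.**  For every even
`p ≥ 2` and `K ≥ 1` there are `C, c₀ > 0` such that: if `D ≤ c₀·‖A‖_p^p`, `x, y` is a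
`K·D`-valued solution with `‖x‖_p = ‖y‖_p`, and `u₀, v₀` is a `K·D`-valued solution, then
there is a refactorization `u, v` of `u₀v₀ᵀ` with
`‖u − x‖_p^p·‖x‖_p^p ≤ C·D` and `‖v − y‖_p^p·‖x‖_p^p ≤ C·D`. -/
theorem rank_one_nearby_optimal (p : ℕ) (hpe : Even p) (hp : 2 ≤ p)
    (K : ℝ) (hK : 1 ≤ K) :
    ∃ C c₀ : ℝ, 0 < C ∧ 0 < c₀ ∧
      ∀ (n m : ℕ) (A : Matrix (Fin n) (Fin m) ℝ) (D : ℝ)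
        (x u₀ : Fin n → ℝ) (y v₀ : Fin m → ℝ),
        0 ≤ D →
        D ≤ c₀ * ∑ i, ∑ j, |A i j| ^ p →
        (∑ i, |x i| ^ p) ^ (1 / (p : ℝ)) = (∑ j, |y j| ^ p) ^ (1 / (p : ℝ)) →
        (∑ i, ∑ j, |A i j - x i * y j| ^ p) ≤ K * D →
        (∑ i, ∑ j, |A i j - u₀ i * v₀ j| ^ p) ≤ K * D →
        ∃ (u : Fin n → ℝ) (v : Fin m → ℝ),
          (∀ i j, u i * v j = u₀ i * v₀ j) ∧
          (∑ i, |u i - x i| ^ p) * (∑ i, |x i| ^ p) ≤ C * D ∧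
          (∑ j, |v j - y j| ^ p) * (∑ i, |x i| ^ p) ≤ C * D := by
  refine ⟨8 ^ p * K, 1 / (8 ^ p * K), by positivity, by positivity, ?_⟩
  intro n m A D x u₀ y v₀ hD hDA hxy hAxy hAuv
  have hp0 : p ≠ 0 := by omega
  have hyx : ∑ j, |y j| ^ p = ∑ i, |x i| ^ p :=
    ((Real.rpow_left_inj (by positivity) (by positivity) (by positivity)).1 hxy).symm
  have hKD : 8 ^ p * (K * D) ≤ ∑ i, ∑ j, |A i j| ^ p := by
    rwa [one_div, inv_mul_eq_div, le_div_iff₀' (by positivity), mul_assoc] at hDA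
  obtain ⟨hE, hEx⟩ := sum_sum_pow_abs_mul_sub_mul_le hp0 A x u₀ y v₀ hyx hKD hAxy hAuv
  obtain ⟨u, v, huv, hu, hv⟩ := exists_rescaling_near hpe hp x u₀ y v₀ hyx hEx
  refine ⟨u, v, huv, hu.trans ?_, hv.trans ?_⟩
  · calc _ ≤ 2 ^ p * (K * D) := hE
      _ ≤ 8 ^ p * K * D := by rw [mul_assoc]; gcongr; norm_num
  · calc _ ≤ 4 ^ p * (2 ^ p * (K * D)) := by gcongr
      _ = 8 ^ p * K * D := by rw [← mul_assoc, ← mul_pow, mul_assoc]; norm_num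
end

section
/- Let X, U ∈ ℝ^{n×k} and Y, V ∈ ℝ^{m×k} be matrices of full column rank (rank k). Then there exists an invertible matrix M ∈ ℝ^{k×k} such that ‖(U + XM)(V − Y(M⁻¹)^⊤)^⊤‖_F² + ‖(U − XM)(V + Y(M⁻¹)^⊤)^⊤‖_F² ≤ 4 · ‖UV^⊤ − XY^⊤‖_F². -/
/-!
Put `A = UVᵀ - XYᵀ` and `B = XMVᵀ - UM⁻¹Yᵀ`. The two products are `A + B` and `A - B`, so by the
parallelogram law the left-hand side is `2‖A‖² + 2‖B‖²`, and it suffices to find `M` with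
`‖B‖ = ‖A‖`. Expanding both norms through Gram matrices, this holds as soon as
`M (VᵀV) Mᵀ = YᵀY` and `Mᵀ (XᵀU) = (UᵀX) M`. Full column rank gives `YᵀY = PᵀP` and `VᵀV = QᵀQ`
with `P`, `Q` invertible; then every `M = Pᵀ O Q⁻ᵀ` with `O` orthogonal satisfies the first
condition, and the second says that `Oᵀ P (XᵀU) Qᵀ` is symmetric, i.e. `O` is the orthogonal factor
of a polar decomposition of `P (XᵀU) Qᵀ`. Such an `O` exists: a maximiser of `O ↦ tr (Oᵀ H)` over
the compact orthogonal group makes `Oᵀ H` symmetric, as one sees by perturbing it with plane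
rotations.
-/

open Matrix

/-- Squared Frobenius norm: `‖M‖_F² = ∑_{i,j} M_{ij}²`. -/
def frobSq {n m : ℕ} (M : Matrix (Fin n) (Fin m) ℝ) : ℝ :=
  ∑ i, ∑ j, (M i j) ^ 2

theorem frobSq_eq_trace {n m : ℕ} (A : Matrix (Fin n) (Fin m) ℝ) :
    frobSq A = trace (Aᵀ * A) := by
  simp only [frobSq, trace, diag, mul_apply, transpose_apply, sq]
  exact Finset.sum_comm

theorem frobSq_add_add_frobSq_sub {n m : ℕ} (A B : Matrix (Fin n) (Fin m) ℝ) :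
    frobSq (A + B) + frobSq (A - B) = 2 * frobSq A + 2 * frobSq B := by
  simp only [frobSq, Matrix.add_apply, Matrix.sub_apply, Finset.mul_sum, ← Finset.sum_add_distrib]
  congr! 2
  ring

theorem isUnit_det_of_rank_eq_card {ι K : Type*} [Fintype ι] [DecidableEq ι] [Field K]
    {A : Matrix ι ι K} (hA : A.rank = Fintype.card ι) : IsUnit A.det := by
  have hrange : LinearMap.range A.mulVecLin = ⊤ :=
    Submodule.eq_top_of_finrank_eq (by rw [← Matrix.rank, hA, Module.finrank_fintype_fun_eq_card])
  exact (isUnit_iff_isUnit_det A).mp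
    (mulVec_surjective_iff_isUnit.mp (LinearMap.range_eq_top.mp hrange))

section Gram

variable {ι : Type*} [Fintype ι]

theorem frobSq_mul_transpose_sub {n m : ℕ} (E G : Matrix (Fin n) ι ℝ)
    (F H : Matrix (Fin m) ι ℝ) :
    frobSq (E * Fᵀ - G * Hᵀ) = trace (Eᵀ * E * (Fᵀ * F)) + trace (Gᵀ * G * (Hᵀ * H))
      - 2 * trace (Eᵀ * G * (Hᵀ * F)) := by
  have hcross : trace (H * Gᵀ * (E * Fᵀ)) = trace (F * Eᵀ * (G * Hᵀ)) := by
    rw [← trace_transpose]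
    simp only [transpose_mul, transpose_transpose, Matrix.mul_assoc]
  have hcycle : ∀ (A D : Matrix (Fin m) ι ℝ) (B C : Matrix (Fin n) ι ℝ),
      trace (A * Bᵀ * (C * Dᵀ)) = trace (Bᵀ * C * (Dᵀ * A)) := by
    intro A D B C
    simp only [Matrix.mul_assoc]
    rw [trace_mul_comm A]
    simp only [Matrix.mul_assoc]
  rw [frobSq_eq_trace]
  simp only [transpose_sub, transpose_mul, transpose_transpose, Matrix.sub_mul, Matrix.mul_sub,
    trace_sub, hcross, hcycle]
  ring

theorem trace_transpose_mul_self_mul_conj {n : ℕ} (E : Matrix (Fin n) ι ℝ)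
    (N G : Matrix ι ι ℝ) :
    trace ((E * N)ᵀ * (E * N) * G) = trace (Eᵀ * E * (N * G * Nᵀ)) := by
  simp only [transpose_mul, Matrix.mul_assoc]
  rw [trace_mul_comm Nᵀ]
  simp only [Matrix.mul_assoc]

variable [DecidableEq ι]

theorem frobSq_mul_sub_mul_inv_eq {n m : ℕ} (X U : Matrix (Fin n) ι ℝ)
    (Y V : Matrix (Fin m) ι ℝ) {M : Matrix ι ι ℝ} (hM : IsUnit M.det)
    (hgram : M * (Vᵀ * V) * Mᵀ = Yᵀ * Y) (hcomm : Mᵀ * (Xᵀ * U) = (Xᵀ * U)ᵀ * M) :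
    frobSq (X * M * Vᵀ - U * M⁻¹ * Yᵀ) = frobSq (U * Vᵀ - X * Yᵀ) := by
  have hgram_inv : M⁻¹ * (Yᵀ * Y) * M⁻¹ᵀ = Vᵀ * V := by
    have hMt : IsUnit Mᵀ.det := by rwa [det_transpose]
    rw [← hgram, transpose_nonsing_inv]
    simp only [Matrix.mul_assoc, nonsing_inv_mul_cancel_left _ _ hM, mul_nonsing_inv _ hMt,
      Matrix.mul_one]
  have hcross : (X * M)ᵀ * (U * M⁻¹) = Uᵀ * X := by
    rw [transpose_mul, Matrix.mul_assoc, ← Matrix.mul_assoc Xᵀ, ← Matrix.mul_assoc, hcomm,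
      transpose_mul, transpose_transpose, Matrix.mul_assoc, mul_nonsing_inv _ hM, Matrix.mul_one]
  rw [frobSq_mul_transpose_sub, frobSq_mul_transpose_sub, trace_transpose_mul_self_mul_conj,
    trace_transpose_mul_self_mul_conj, hgram, hgram_inv, hcross]
  ring

open scoped MatrixOrder in
theorem exists_isUnit_det_transpose_mul_self_eq {m : Type*} [Fintype m] (Y : Matrix m ι ℝ)
    (hY : Y.rank = Fintype.card ι) : ∃ P : Matrix ι ι ℝ, IsUnit P.det ∧ Yᵀ * Y = Pᵀ * P := by
  obtain ⟨P, hP⟩ := CStarAlgebra.nonneg_iff_eq_star_mul_self.mp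
    (posSemidef_conjTranspose_mul_self Y).nonneg
  simp only [conjTranspose_eq_transpose_of_trivial, star_eq_conjTranspose] at hP
  refine ⟨P, ?_, hP⟩
  have hgram : IsUnit (Yᵀ * Y).det :=
    isUnit_det_of_rank_eq_card (by rw [rank_transpose_mul_self, hY])
  rw [hP, det_mul, det_transpose] at hgram
  exact isUnit_of_mul_isUnit_left hgram

end Gram

theorem eq_zero_of_forall_unit_circle {c s : ℝ}
    (h : ∀ a b : ℝ, a ^ 2 + b ^ 2 = 1 → a * c + b * s ≤ c) : s = 0 := by
  by_contra hs
  set r := √(c ^ 2 + s ^ 2)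
  have hr_sq : r ^ 2 = c ^ 2 + s ^ 2 := Real.sq_sqrt (by positivity)
  have hr : 0 < r := Real.sqrt_pos.mpr (by positivity)
  have hle : r ≤ c := by
    have hrc : c / r * c + s / r * s = r := by field_simp; linarith
    exact hrc ▸ h (c / r) (s / r) (by field_simp; linarith)
  nlinarith [pow_pos (abs_pos.mpr hs) 2, sq_abs s]

section PolarDecomposition

variable {ι : Type*} [Fintype ι] [DecidableEq ι]

def planeRotation (i j : ι) (a b : ℝ) : Matrix ι ι ℝ :=
  1 + (a - 1) • (single i i 1 + single j j 1) + b • (single i j 1 - single j i 1)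

theorem planeRotation_transpose_mul_self {i j : ι} (hij : i ≠ j) {a b : ℝ}
    (hab : a ^ 2 + b ^ 2 = 1) : (planeRotation i j a b)ᵀ * planeRotation i j a b = 1 := by
  calc (planeRotation i j a b)ᵀ * planeRotation i j a b
      = 1 + (a ^ 2 + b ^ 2 - 1) • (single i i 1 + single j j 1) := by
        simp only [planeRotation, transpose_add, transpose_smul, transpose_sub, transpose_single,
          transpose_one, add_mul, mul_add, sub_mul, mul_sub, smul_mul_assoc, mul_smul_comm,
          Matrix.one_mul, single_mul_single_same, single_mul_single_of_ne, hij, hij.symm, ne_eq,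
          not_false_eq_true, mul_one]
        module
    _ = 1 := by rw [hab, sub_self, zero_smul, add_zero]

theorem trace_planeRotation_transpose_mul (i j : ι) (a b : ℝ) (K : Matrix ι ι ℝ) :
    trace ((planeRotation i j a b)ᵀ * K) =
      trace K + (a - 1) * (K i i + K j j) + b * (K i j - K j i) := by
  simp only [planeRotation, smul_add, smul_single, smul_eq_mul, mul_one, transpose_add,
    transpose_one, transpose_single, transpose_smul, transpose_sub, add_mul, one_mul,
    Algebra.smul_mul_assoc, sub_mul, trace_add, trace_single_mul, trace_smul, trace_sub]
  ring

theorem mem_unitaryGroup_iff_transpose_mul_self {A : Matrix ι ι ℝ} :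
    A ∈ unitaryGroup ι ℝ ↔ Aᵀ * A = 1 := by
  rw [mem_unitaryGroup_iff', star_eq_conjTranspose, conjTranspose_eq_transpose_of_trivial]

theorem isCompact_unitaryGroup : IsCompact (unitaryGroup ι ℝ : Set (Matrix ι ι ℝ)) :=
  (isCompact_univ_pi fun _ => isCompact_univ_pi fun _ => isCompact_Icc).of_isClosed_subset
    (isClosed_unitary (R := Matrix ι ι ℝ))
    fun _ hU i _ j _ => abs_le.mp (entry_norm_bound_of_unitary hU i j)

theorem exists_mem_unitaryGroup_isSymm_transpose_mul (H : Matrix ι ι ℝ) :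
    ∃ O ∈ unitaryGroup ι ℝ, (Oᵀ * H).IsSymm := by
  obtain ⟨O, hO, hmax⟩ := isCompact_unitaryGroup.exists_isMaxOn ⟨1, one_mem _⟩
    (f := fun O : Matrix ι ι ℝ => trace (Oᵀ * H))
    (continuous_id.matrix_transpose.matrix_mul continuous_const).matrix_trace.continuousOn
  refine ⟨O, hO, ?_⟩
  set K := Oᵀ * H
  ext p q
  rcases eq_or_ne q p with rfl | hqp
  · rfl
  have hrot : ∀ a b : ℝ, a ^ 2 + b ^ 2 = 1 →
      a * (K p p + K q q) + b * (K p q - K q p) ≤ K p p + K q q := by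
    intro a b hab
    have hmem : O * planeRotation p q a b ∈ unitaryGroup ι ℝ :=
      mul_mem hO (mem_unitaryGroup_iff_transpose_mul_self.mpr
        (planeRotation_transpose_mul_self hqp.symm hab))
    have hle : trace ((O * planeRotation p q a b)ᵀ * H) ≤ trace K := hmax hmem
    rw [transpose_mul, Matrix.mul_assoc, trace_planeRotation_transpose_mul] at hle
    linarith
  rw [transpose_apply]
  linarith [eq_zero_of_forall_unit_circle hrot]

theorem exists_isUnit_det_mul_mul_transpose_eq_and_transpose_mul_eq (C : Matrix ι ι ℝ)
    {P Q : Matrix ι ι ℝ} (hP : IsUnit P.det) (hQ : IsUnit Q.det) :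
    ∃ M : Matrix ι ι ℝ, IsUnit M.det ∧ M * (Qᵀ * Q) * Mᵀ = Pᵀ * P ∧ Mᵀ * C = Cᵀ * M := by
  obtain ⟨O, hO, hsymm⟩ := exists_mem_unitaryGroup_isSymm_transpose_mul (P * C * Qᵀ)
  have hOO : O * Oᵀ = 1 := by
    simpa [star_eq_conjTranspose] using mem_unitaryGroup_iff.mp hO
  have hQt : IsUnit Qᵀ.det := by rwa [det_transpose]
  refine ⟨Pᵀ * O * Qᵀ⁻¹, ?_, ?_, ?_⟩
  · simp only [det_mul, det_transpose]
    exact (hP.mul (UnitaryGroup.det_isUnit ⟨O, hO⟩)).mul (isUnit_nonsing_inv_det _ hQt)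
  · simp only [transpose_mul, transpose_transpose, transpose_nonsing_inv, Matrix.mul_assoc,
      nonsing_inv_mul_cancel_left _ _ hQt, mul_nonsing_inv_cancel_left _ _ hQ]
    rw [← Matrix.mul_assoc O, hOO, Matrix.one_mul]
  · calc (Pᵀ * O * Qᵀ⁻¹)ᵀ * C = Q⁻¹ * (Oᵀ * (P * C * Qᵀ)) * Qᵀ⁻¹ := by
          simp only [transpose_mul, transpose_transpose, transpose_nonsing_inv, Matrix.mul_assoc,
            mul_nonsing_inv _ hQt, Matrix.mul_one]
      _ = Q⁻¹ * (Oᵀ * (P * C * Qᵀ))ᵀ * Qᵀ⁻¹ := by rw [hsymm.eq]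
      _ = Cᵀ * (Pᵀ * O * Qᵀ⁻¹) := by
          simp only [transpose_mul, transpose_transpose, Matrix.mul_assoc,
            nonsing_inv_mul_cancel_left _ _ hQ]

end PolarDecomposition

theorem higher_rank_l2_identifiability_general {n m k : ℕ}
    (X U : Matrix (Fin n) (Fin k) ℝ) (Y V : Matrix (Fin m) (Fin k) ℝ)
    (hY : Y.rank = k) (hV : V.rank = k) :
    ∃ M : Matrix (Fin k) (Fin k) ℝ, IsUnit M.det ∧
      frobSq ((U + X * M) * (V - Y * (M⁻¹)ᵀ)ᵀ)
        + frobSq ((U - X * M) * (V + Y * (M⁻¹)ᵀ)ᵀ)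
      ≤ 4 * frobSq (U * Vᵀ - X * Yᵀ) := by
  obtain ⟨P, hP, hYP⟩ := exists_isUnit_det_transpose_mul_self_eq Y (by rwa [Fintype.card_fin])
  obtain ⟨Q, hQ, hVQ⟩ := exists_isUnit_det_transpose_mul_self_eq V (by rwa [Fintype.card_fin])
  obtain ⟨M, hM, hgram, hcomm⟩ :=
    exists_isUnit_det_mul_mul_transpose_eq_and_transpose_mul_eq (Xᵀ * U) hP hQ
  rw [← hYP, ← hVQ] at hgram
  have hplus : (U + X * M) * (V - Y * (M⁻¹)ᵀ)ᵀ
      = (U * Vᵀ - X * Yᵀ) + (X * M * Vᵀ - U * M⁻¹ * Yᵀ) := by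
    simp only [transpose_sub, transpose_mul, transpose_transpose, Matrix.add_mul, Matrix.mul_sub,
      Matrix.mul_assoc, mul_nonsing_inv_cancel_left _ _ hM]
    abel
  have hminus : (U - X * M) * (V + Y * (M⁻¹)ᵀ)ᵀ
      = (U * Vᵀ - X * Yᵀ) - (X * M * Vᵀ - U * M⁻¹ * Yᵀ) := by
    simp only [transpose_add, transpose_mul, transpose_transpose, Matrix.sub_mul, Matrix.mul_add,
      Matrix.mul_assoc, mul_nonsing_inv_cancel_left _ _ hM]
    abel
  refine ⟨M, hM, le_of_eq ?_⟩
  rw [hplus, hminus, frobSq_add_add_frobSq_sub, frobSq_mul_sub_mul_inv_eq X U Y V hM hgram hcomm]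
  ring

/-- **Higher rank ℓ₂ LRA identifiability.**  For full column rank `X, U ∈ ℝ^{n×k}` and
`Y, V ∈ ℝ^{m×k}` there is an invertible `M ∈ ℝ^{k×k}` such that
`‖(U + XM)(V − Y(M⁻¹)ᵀ)ᵀ‖_F² + ‖(U − XM)(V + Y(M⁻¹)ᵀ)ᵀ‖_F² ≤ 4‖UVᵀ − XYᵀ‖_F²`. -/
theorem higher_rank_l2_identifiability {n m k : ℕ}
    (X U : Matrix (Fin n) (Fin k) ℝ) (Y V : Matrix (Fin m) (Fin k) ℝ)
    (hX : X.rank = k) (hU : U.rank = k) (hY : Y.rank = k) (hV : V.rank = k) :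
    ∃ M : Matrix (Fin k) (Fin k) ℝ, IsUnit M.det ∧
      frobSq ((U + X * M) * (V - Y * (M⁻¹)ᵀ)ᵀ)
        + frobSq ((U - X * M) * (V + Y * (M⁻¹)ᵀ)ᵀ)
      ≤ 4 * frobSq (U * Vᵀ - X * Yᵀ) :=
  higher_rank_l2_identifiability_general X U Y V hY hV
end

section
/- Let p ≥ 1 be a real number, and let F ∈ ℝ^{n×k} and G ∈ ℝ^{m×k} be matrices of full column rank (rank k). Then there exists an invertible matrix N ∈ ℝ^{k×k} such that ‖FN‖_p^p = ‖G(N⁻¹)^⊤‖_p^p and ‖FN‖_p^p ≤ k · ( ‖FG^⊤‖_p^p )^{1/2}. -/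
/-!
Put `g v = ‖F v‖_p^p`. Because `F` has full column rank, `g` is continuous, absolutely homogeneous
of degree `p` and positive away from `0`. Auerbach's argument: among the matrices `M` whose rows all
satisfy `g = 1` (a compact set), one maximizing `|det M|` also satisfies `|(w M⁻¹)_i|^p ≤ g w` for
every `w`. With `N = Mᵀ` this gives `‖F N‖_p^p = k`, and applied to the rows of `G` it gives
`‖G N⁻ᵀ‖_p^p ≤ k ‖F Gᵀ‖_p^p`. Scaling `N` by `s` multiplies the first quantity by `s^p` and the
second by `s^(-p)`, so both can be made equal to their geometric mean, which is at most
`k (‖F Gᵀ‖_p^p)^(1/2)`.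
-/

open Matrix

/-- Entrywise `p`-th power sum for real `p`: `‖M‖_p^p = ∑_{i,j} |M_{ij}|^p`. -/
noncomputable def lpPowR (p : ℝ) {n m : ℕ} (M : Matrix (Fin n) (Fin m) ℝ) : ℝ :=
  ∑ i, ∑ j, |M i j| ^ p

open Finset

theorem Matrix.det_updateRow_vecMul {ι R : Type*} [Fintype ι] [DecidableEq ι] [CommRing R]
    (A : Matrix ι ι R) (i : ι) (d : ι → R) : (A.updateRow i (d ᵥ* A)).det = d i * A.det := by
  rw [vecMul_eq_sum, det_updateRow_sum, smul_eq_mul]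

theorem Matrix.mulVec_injective_of_rank_eq {K : Type*} [Field K] {n k : ℕ}
    {F : Matrix (Fin n) (Fin k) K} (hF : F.rank = k) : Function.Injective F.mulVec :=
  mulVec_injective_iff.mpr <| linearIndependent_iff_card_eq_finrank_span.mpr <| by
    rw [Set.finrank, ← rank_eq_finrank_span_cols, hF, Fintype.card_fin]

theorem Matrix.transpose_inv_smul_transpose {ι : Type*} [Fintype ι] [DecidableEq ι] {s : ℝ}
    (hs : s ≠ 0) {M : Matrix ι ι ℝ} (hM : IsUnit M.det) : ((s • Mᵀ)⁻¹)ᵀ = s⁻¹ • M⁻¹ := by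
  have hMt : IsUnit Mᵀ.det := by rwa [det_transpose]
  rw [inv_eq_left_inv (B := s⁻¹ • Mᵀ⁻¹), transpose_smul, transpose_nonsing_inv, transpose_transpose]
  rw [smul_mul_smul_comm, inv_mul_cancel₀ hs, nonsing_inv_mul _ hMt, one_smul]

structure IsHomogeneousGauge {E : Type*} [NormedAddCommGroup E] [NormedSpace ℝ E]
    (p : ℝ) (g : E → ℝ) : Prop where
  continuous : Continuous g
  map_smul : ∀ (a : ℝ) (v : E), g (a • v) = |a| ^ p * g v
  pos : ∀ v, v ≠ 0 → 0 < g v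

namespace IsHomogeneousGauge

variable {E E' : Type*} [NormedAddCommGroup E] [NormedSpace ℝ E]
  [NormedAddCommGroup E'] [NormedSpace ℝ E'] {p : ℝ} {g : E → ℝ}

theorem map_zero (hg : IsHomogeneousGauge p g) (hp : 0 < p) : g 0 = 0 := by
  simpa [Real.zero_rpow hp.ne'] using hg.map_smul 0 0

theorem nonneg (hg : IsHomogeneousGauge p g) (hp : 0 < p) (v : E) : 0 ≤ g v := by
  rcases eq_or_ne v 0 with rfl | hv
  · exact (hg.map_zero hp).ge
  · exact (hg.pos v hv).le

theorem map_inv_rpow_smul_self (hg : IsHomogeneousGauge p g) (hp : 0 < p) {v : E} (hv : v ≠ 0) :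
    g ((g v ^ p⁻¹)⁻¹ • v) = 1 := by
  have hgv := hg.pos v hv
  rw [hg.map_smul, abs_of_pos (by positivity), Real.inv_rpow (by positivity),
    Real.rpow_inv_rpow hgv.le hp.ne', inv_mul_cancel₀ hgv.ne']

theorem comp_injective [FiniteDimensional ℝ E] {g : E' → ℝ} (hg : IsHomogeneousGauge p g)
    (L : E →ₗ[ℝ] E') (hL : Function.Injective L) : IsHomogeneousGauge p (g ∘ L) where
  continuous := hg.continuous.comp L.continuous_of_finiteDimensional
  map_smul a v := by simp only [Function.comp_apply, L.map_smul, hg.map_smul]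
  pos v hv := hg.pos _ ((map_ne_zero_iff L hL).mpr hv)

theorem exists_pos_mul_norm_rpow_le [FiniteDimensional ℝ E] (hg : IsHomogeneousGauge p g)
    (hp : 0 < p) : ∃ ε > 0, ∀ v, ε * ‖v‖ ^ p ≤ g v := by
  rcases subsingleton_or_nontrivial E with hE | hE
  · refine ⟨1, one_pos, fun v => ?_⟩
    rw [Subsingleton.elim v 0, norm_zero, Real.zero_rpow hp.ne', hg.map_zero hp, mul_zero]
  obtain ⟨u₀, hu₀, hmin⟩ := (isCompact_sphere (0 : E) 1).exists_isMinOn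
    (NormedSpace.sphere_nonempty.mpr zero_le_one) hg.continuous.continuousOn
  refine ⟨g u₀, hg.pos u₀ (ne_zero_of_mem_unit_sphere ⟨u₀, hu₀⟩), fun v => ?_⟩
  rcases eq_or_ne v 0 with rfl | hv
  · rw [norm_zero, Real.zero_rpow hp.ne', hg.map_zero hp, mul_zero]
  have hnv : 0 < ‖v‖ := norm_pos_iff.mpr hv
  have hu : ‖v‖⁻¹ • v ∈ Metric.sphere (0 : E) 1 := by
    simp [norm_smul, hnv.ne']
  calc g u₀ * ‖v‖ ^ p ≤ g (‖v‖⁻¹ • v) * ‖v‖ ^ p := by gcongr; exact hmin hu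
    _ = g v := by
      rw [hg.map_smul, abs_of_pos (inv_pos.mpr hnv), Real.inv_rpow hnv.le]
      field_simp

theorem isCompact_setOf_eq_one [FiniteDimensional ℝ E] (hg : IsHomogeneousGauge p g)
    (hp : 0 < p) : IsCompact {v | g v = 1} := by
  obtain ⟨ε, hε, hle⟩ := hg.exists_pos_mul_norm_rpow_le hp
  refine Metric.isCompact_of_isClosed_isBounded (isClosed_eq hg.continuous continuous_const) ?_
  refine (Metric.isBounded_closedBall (x := 0) (r := ε⁻¹ ^ p⁻¹)).subset fun v (hv : g v = 1) => ?_
  have hvp : ‖v‖ ^ p ≤ ε⁻¹ := by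
    rw [← one_div, le_div_iff₀' hε, ← hv]
    exact hle v
  rw [mem_closedBall_zero_iff]
  calc ‖v‖ = (‖v‖ ^ p) ^ p⁻¹ := (Real.rpow_rpow_inv (norm_nonneg v) hp.ne').symm
    _ ≤ ε⁻¹ ^ p⁻¹ := by gcongr

section Auerbach

variable {ι : Type*} [Fintype ι] [DecidableEq ι] {g : (ι → ℝ) → ℝ}

theorem abs_vecMul_inv_rpow_le_of_det_maximal (hg : IsHomogeneousGauge p g) (hp : 0 < p)
    {M : Matrix ι ι ℝ} (hM : ∀ i, g (M i) = 1) (hdet : M.det ≠ 0)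
    (hmax : ∀ M' : Matrix ι ι ℝ, (∀ i, g (M' i) = 1) → |M'.det| ≤ |M.det|)
    (w : ι → ℝ) (i : ι) : |(w ᵥ* M⁻¹) i| ^ p ≤ g w := by
  rcases eq_or_ne w 0 with rfl | hw
  · rw [zero_vecMul, Pi.zero_apply, abs_zero, Real.zero_rpow hp.ne', hg.map_zero hp]
  set d := w ᵥ* M⁻¹
  set t := g w ^ p⁻¹
  have ht : 0 < t := Real.rpow_pos_of_pos (hg.pos w hw) _
  have hdM : d ᵥ* M = w := by
    rw [vecMul_vecMul, nonsing_inv_mul _ (isUnit_iff_ne_zero.mpr hdet), vecMul_one]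
  -- Maximality of `|det M|` against `M` with its `i`-th row replaced by `w` normalized
  -- forces `|d i| ≤ t`.
  have hrows : ∀ j, g (M.updateRow i (t⁻¹ • w) j) = 1 := by
    intro j
    rcases eq_or_ne j i with rfl | hj
    · rw [updateRow_self]; exact hg.map_inv_rpow_smul_self hp hw
    · rw [updateRow_ne hj]; exact hM j
  have hdet' : (M.updateRow i (t⁻¹ • w)).det = t⁻¹ * d i * M.det := by
    rw [← hdM, ← smul_vecMul, det_updateRow_vecMul, Pi.smul_apply, smul_eq_mul]
  have hdt : |d i| ≤ t := by
    have h := hmax _ hrows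
    rw [hdet', abs_mul, abs_mul, abs_inv, abs_of_pos ht] at h
    have h1 : t⁻¹ * |d i| ≤ 1 := le_of_mul_le_mul_right (by simpa using h) (abs_pos.mpr hdet)
    rwa [inv_mul_le_iff₀ ht, mul_one] at h1
  calc |d i| ^ p ≤ t ^ p := by gcongr
    _ = g w := Real.rpow_inv_rpow (hg.nonneg hp w) hp.ne'

theorem exists_auerbach_basis (hg : IsHomogeneousGauge p g) (hp : 0 < p) :
    ∃ M : Matrix ι ι ℝ, IsUnit M.det ∧ (∀ i, g (M i) = 1) ∧
      ∀ w i, |(w ᵥ* M⁻¹) i| ^ p ≤ g w := by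
  set S : Set (Matrix ι ι ℝ) := Set.univ.pi fun _ => {v | g v = 1}
  have hS : IsCompact S := isCompact_univ_pi fun _ => hg.isCompact_setOf_eq_one hp
  have hsingle : ∀ i, (Pi.single i 1 : ι → ℝ) ≠ 0 := fun i =>
    Pi.single_ne_zero_iff.mpr one_ne_zero
  set D : Matrix ι ι ℝ := diagonal fun i => (g (Pi.single i 1) ^ p⁻¹)⁻¹
  have hD : D ∈ S := by
    intro i _
    have hDi : D i = (g (Pi.single i 1) ^ p⁻¹)⁻¹ • Pi.single i 1 := by
      ext j; simp [D, diagonal_apply, Pi.single_apply, eq_comm]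
    show g (D i) = 1
    rw [hDi]
    exact hg.map_inv_rpow_smul_self hp (hsingle i)
  have hDdet : D.det ≠ 0 := by
    rw [det_diagonal]
    exact prod_ne_zero_iff.mpr fun i _ =>
      inv_ne_zero (Real.rpow_pos_of_pos (hg.pos _ (hsingle i)) _).ne'
  obtain ⟨M, hMS, hmax⟩ :=
    hS.exists_isMaxOn ⟨D, hD⟩ (continuous_abs.comp continuous_id.matrix_det).continuousOn
  have hMrows : ∀ i, g (M i) = 1 := fun i => hMS i (Set.mem_univ i)
  have hdet : M.det ≠ 0 := fun h =>
    hDdet (abs_eq_zero.mp (le_antisymm (by simpa [h] using hmax hD) (abs_nonneg _)))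
  exact ⟨M, isUnit_iff_ne_zero.mpr hdet, hMrows, abs_vecMul_inv_rpow_le_of_det_maximal hg hp
    hMrows hdet fun M' hM' => hmax fun i _ => hM' i⟩

end Auerbach

end IsHomogeneousGauge

section lpPow

variable {p : ℝ} {ι : Type*} [Fintype ι]

noncomputable def lpPowVec (p : ℝ) (x : ι → ℝ) : ℝ :=
  ∑ i, |x i| ^ p

theorem lpPowVec_nonneg (x : ι → ℝ) : 0 ≤ lpPowVec p x :=
  sum_nonneg fun _ _ => Real.rpow_nonneg (abs_nonneg _) p

theorem lpPowVec_pos {x : ι → ℝ} (hx : x ≠ 0) : 0 < lpPowVec p x := by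
  obtain ⟨i, hi⟩ := Function.ne_iff.mp hx
  exact sum_pos' (fun _ _ => Real.rpow_nonneg (abs_nonneg _) p)
    ⟨i, mem_univ i, Real.rpow_pos_of_pos (abs_pos.mpr hi) p⟩

theorem lpPowVec_smul (a : ℝ) (x : ι → ℝ) : lpPowVec p (a • x) = |a| ^ p * lpPowVec p x := by
  simp only [lpPowVec, mul_sum, Pi.smul_apply, smul_eq_mul, abs_mul,
    Real.mul_rpow (abs_nonneg _) (abs_nonneg _)]

theorem isHomogeneousGauge_lpPowVec (hp : 0 ≤ p) :
    IsHomogeneousGauge p (lpPowVec p : (ι → ℝ) → ℝ) where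
  continuous := continuous_finsetSum _ fun i _ =>
    (Real.continuous_rpow_const hp).comp (continuous_apply i).abs
  map_smul := lpPowVec_smul
  pos _ := lpPowVec_pos

variable {n m l : ℕ}

theorem lpPowR_eq_sum_lpPowVec (M : Matrix (Fin n) (Fin m) ℝ) :
    lpPowR p M = ∑ i, lpPowVec p (M i) := rfl

theorem lpPowR_mul (A : Matrix (Fin n) (Fin l) ℝ) (B : Matrix (Fin l) (Fin m) ℝ) :
    lpPowR p (A * B) = ∑ i, lpPowVec p (A i ᵥ* B) := rfl

theorem lpPowR_mul_transpose (A : Matrix (Fin n) (Fin l) ℝ) (B : Matrix (Fin m) (Fin l) ℝ) :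
    lpPowR p (A * Bᵀ) = ∑ j, lpPowVec p (A *ᵥ B j) := sum_comm

theorem lpPowR_smul (a : ℝ) (M : Matrix (Fin n) (Fin m) ℝ) :
    lpPowR p (a • M) = |a| ^ p * lpPowR p M := by
  simp only [lpPowR_eq_sum_lpPowVec, mul_sum, ← lpPowVec_smul]; rfl

theorem lpPowR_pos {M : Matrix (Fin n) (Fin m) ℝ} (hM : M ≠ 0) : 0 < lpPowR p M := by
  obtain ⟨i, hi⟩ := Function.ne_iff.mp hM
  rw [lpPowR_eq_sum_lpPowVec]
  exact sum_pos' (fun _ _ => lpPowVec_nonneg _) ⟨i, mem_univ i, lpPowVec_pos hi⟩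

theorem exists_lpPowR_smul_eq_sqrt_mul (hp : 0 < p) {n' m' : ℕ} {A : Matrix (Fin n) (Fin m) ℝ}
    {B : Matrix (Fin n') (Fin m') ℝ} (hA : 0 < lpPowR p A) (hB : 0 < lpPowR p B) :
    ∃ s : ℝ, 0 < s ∧ lpPowR p (s • A) = √(lpPowR p A * lpPowR p B) ∧
      lpPowR p (s⁻¹ • B) = √(lpPowR p A * lpPowR p B) := by
  obtain ⟨a, ha, hA2⟩ : ∃ a > 0, lpPowR p A = a ^ 2 :=
    ⟨_, Real.sqrt_pos.mpr hA, (Real.sq_sqrt hA.le).symm⟩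
  obtain ⟨b, hb, hB2⟩ : ∃ b > 0, lpPowR p B = b ^ 2 :=
    ⟨_, Real.sqrt_pos.mpr hB, (Real.sq_sqrt hB.le).symm⟩
  have hs : 0 < (b / a) ^ p⁻¹ := by positivity
  have hsp : ((b / a) ^ p⁻¹) ^ p = b / a := Real.rpow_inv_rpow (by positivity) hp.ne'
  refine ⟨(b / a) ^ p⁻¹, hs, ?_, ?_⟩ <;>
    rw [lpPowR_smul, hA2, hB2, ← mul_pow, Real.sqrt_sq (by positivity)]
  · rw [abs_of_pos hs, hsp]
    field_simp
  · rw [abs_of_pos (inv_pos.mpr hs), Real.inv_rpow hs.le, hsp]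
    field_simp

end lpPow

/-- **Pairwise ℓ_p balancing (via Auerbach's lemma).**  For `p ≥ 1` and full column rank
`F ∈ ℝ^{n×k}`, `G ∈ ℝ^{m×k}` there is an invertible `N ∈ ℝ^{k×k}` with
`‖FN‖_p^p = ‖G(N⁻¹)ᵀ‖_p^p ≤ k·(‖FGᵀ‖_p^p)^{1/2}`. -/
theorem pairwise_lp_balancing (p : ℝ) (hp : 1 ≤ p) {n m k : ℕ}
    (F : Matrix (Fin n) (Fin k) ℝ) (G : Matrix (Fin m) (Fin k) ℝ)
    (hF : F.rank = k) (hG : G.rank = k) :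
    ∃ N : Matrix (Fin k) (Fin k) ℝ, IsUnit N.det ∧
      lpPowR p (F * N) = lpPowR p (G * (N⁻¹)ᵀ) ∧
      lpPowR p (F * N) ≤ (k : ℝ) * Real.sqrt (lpPowR p (F * Gᵀ)) := by
  have hp0 : 0 < p := by linarith
  rcases Nat.eq_zero_or_pos k with rfl | hk
  · exact ⟨1, by simp, by simp [lpPowR], by simp [lpPowR]⟩
  have hg : IsHomogeneousGauge p (lpPowVec p ∘ F.mulVecLin) :=
    (isHomogeneousGauge_lpPowVec hp0.le).comp_injective _ (mulVec_injective_of_rank_eq hF)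
  obtain ⟨M, hMdet, hMrows, hdual⟩ := hg.exists_auerbach_basis hp0
  have hFM : lpPowR p (F * Mᵀ) = k := by
    have hcols : ∀ i, lpPowVec p (F *ᵥ M i) = 1 := hMrows
    simp [lpPowR_mul_transpose, hcols]
  have hGM : lpPowR p (G * M⁻¹) ≤ k * lpPowR p (F * Gᵀ) := by
    rw [lpPowR_mul, lpPowR_mul_transpose, mul_sum]
    refine sum_le_sum fun j _ => ?_
    calc lpPowVec p (G j ᵥ* M⁻¹) ≤ ∑ _i : Fin k, lpPowVec p (F *ᵥ G j) :=
          sum_le_sum fun i _ => hdual (G j) i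
      _ = k * lpPowVec p (F *ᵥ G j) := by simp
  have hGM0 : G * M⁻¹ ≠ 0 := by
    intro h
    have := rank_mul_eq_left_of_isUnit_det M⁻¹ G (isUnit_nonsing_inv_det M hMdet)
    rw [h, rank_zero] at this
    omega
  obtain ⟨s, hs, hsF, hsG⟩ := exists_lpPowR_smul_eq_sqrt_mul hp0
    (hFM ▸ Nat.cast_pos.mpr hk) (lpPowR_pos hGM0)
  refine ⟨s • Mᵀ, ?_, ?_, ?_⟩
  · rw [det_smul, det_transpose]; exact (hs.ne'.isUnit.pow _).mul hMdet
  · rw [Matrix.mul_smul, transpose_inv_smul_transpose hs.ne' hMdet, Matrix.mul_smul, hsF, hsG]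
  · rw [Matrix.mul_smul, hsF, hFM]
    calc √(k * lpPowR p (G * M⁻¹)) ≤ √(k * (k * lpPowR p (F * Gᵀ))) := by gcongr
      _ = k * √(lpPowR p (F * Gᵀ)) := by
        rw [← mul_assoc, Real.sqrt_mul (by positivity), Real.sqrt_mul_self (by positivity)]
end

section
/- For every even integer p ≥ 2 there is a constant C_p > 0 with the following property. Let n, m ≥ 1, k ≥ 1, and B ≥ 1 be natural numbers, and let A ∈ ℝ^{n×m} be a matrix whose entries are integers with |A_{ij}| ≤ 2^B for all i, j. If rank(A) > k, then every matrix G ∈ ℝ^{n×m} with rank(G) ≤ k satisfies ‖A − G‖_p^p ≥ (n·m)^{−C_p·k} · 2^{−C_p·k·B}. -/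
/-!
If `rank A > k`, then `A` has a nonsingular `(k+1) × (k+1)` minor `M`, and since `A` is an
integer matrix, `|det M| ≥ 1`. The same minor `N` of a matrix `G` of rank at most `k` is singular.
The determinant is Lipschitz in the entries on bounded sets: if the largest entry `ε` of `|A - G|`
is at most `1` (otherwise there is nothing to prove), then
`1 ≤ |det M - det N| ≤ (k+1)! (k+1) ε (2^B + 1)^k`. Hence some entry of `A - G` is at least
`((k+1)! (k+1) (2^B + 1)^k)⁻¹ ≥ (nm)^{-3k} 2^{-3kB}`, and its `p`-th power alone bounds the sum.
-/

open Matrix Finset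

theorem exists_linearIndependent_comp_of_le_finrank_span {K V ι : Type*} [Field K]
    [AddCommGroup V] [Module K V] [Finite ι] (v : ι → V) {s : ℕ}
    (hs : s ≤ Module.finrank K (Submodule.span K (Set.range v))) :
    ∃ φ : Fin s → ι, LinearIndependent K (v ∘ φ) := by
  obtain ⟨κ, a, ha, hspan, hli⟩ := exists_linearIndependent' K v
  have : Fintype κ := @Fintype.ofFinite κ (Finite.of_injective a ha)
  rw [← hspan, ← Set.finrank, ← linearIndependent_iff_card_eq_finrank_span.mp hli,
    ← Fintype.card_fin s] at hs
  obtain ⟨e⟩ := Function.Embedding.nonempty_of_card_le hs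
  exact ⟨a ∘ e, hli.comp e e.injective⟩

theorem Matrix.exists_det_submatrix_ne_zero_of_le_rank {K m n : Type*} [Field K] [Fintype m]
    [Fintype n] (A : Matrix m n K) {s : ℕ} (hs : s ≤ A.rank) :
    ∃ (r : Fin s → m) (c : Fin s → n), (A.submatrix r c).det ≠ 0 := by
  classical
  rw [rank_eq_finrank_span_cols] at hs
  obtain ⟨c, hc⟩ := exists_linearIndependent_comp_of_le_finrank_span A.col hs
  have hrank : s ≤ Module.finrank K (Submodule.span K (Set.range (A.submatrix id c).row)) := by
    rw [← rank_eq_finrank_span_row, ← rank_transpose,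
      LinearIndependent.rank_matrix (M := (A.submatrix id c)ᵀ) hc, Fintype.card_fin]
  obtain ⟨r, hr⟩ := exists_linearIndependent_comp_of_le_finrank_span _ hrank
  exact ⟨r, c, ((isUnit_iff_isUnit_det _).mp (linearIndependent_rows_iff_isUnit.mp hr)).ne_zero⟩

section OrderedRing

variable {R : Type*} [CommRing R] [LinearOrder R] [IsStrictOrderedRing R]

theorem Finset.abs_prod_sub_prod_le {ι : Type*} [DecidableEq ι] (t : Finset ι) {f g : ι → R}
    {a ε : R} (hf : ∀ i ∈ t, |f i| ≤ a) (hg : ∀ i ∈ t, |g i| ≤ a)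
    (hfg : ∀ i ∈ t, |f i - g i| ≤ ε) :
    |∏ i ∈ t, f i - ∏ i ∈ t, g i| ≤ #t * ε * a ^ (#t - 1) := by
  induction t using Finset.induction_on with
  | empty => simp
  | insert i t hi ih =>
    simp only [forall_mem_insert] at hf hg hfg
    have ha : 0 ≤ a := (abs_nonneg _).trans hf.1
    have hprod : |∏ j ∈ t, g j| ≤ a ^ #t := by
      rw [abs_prod, ← prod_const]
      exact prod_le_prod (fun _ _ => abs_nonneg _) hg.2
    have hstep : ∀ c : ℕ, a * (c * ε * a ^ (c - 1)) = c * ε * a ^ c := by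
      rintro (_ | c)
      · simp
      · simp only [Nat.add_sub_cancel, pow_succ]; ring
    rw [prod_insert hi, prod_insert hi, card_insert_of_notMem hi, Nat.add_sub_cancel]
    calc |f i * ∏ j ∈ t, f j - g i * ∏ j ∈ t, g j|
        = |f i * (∏ j ∈ t, f j - ∏ j ∈ t, g j) + (f i - g i) * ∏ j ∈ t, g j| := by ring_nf
      _ ≤ a * (#t * ε * a ^ (#t - 1)) + ε * a ^ #t := by
        refine (abs_add_le _ _).trans (add_le_add ?_ ?_) <;> rw [abs_mul]
        · exact mul_le_mul hf.1 (ih hf.2 hg.2 hfg.2) (abs_nonneg _) ha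
        · exact mul_le_mul hfg.1 hprod (abs_nonneg _) ((abs_nonneg _).trans hfg.1)
      _ = ↑(#t + 1) * ε * a ^ #t := by rw [hstep]; push_cast; ring

theorem Matrix.abs_det_sub_det_le {n : Type*} [Fintype n] [DecidableEq n] {M N : Matrix n n R}
    {a ε : R} (hM : ∀ i j, |M i j| ≤ a) (hN : ∀ i j, |N i j| ≤ a)
    (hMN : ∀ i j, |M i j - N i j| ≤ ε) :
    |M.det - N.det| ≤
      (Fintype.card n).factorial * Fintype.card n * ε * a ^ (Fintype.card n - 1) := by
  rw [det_apply', det_apply', ← sum_sub_distrib]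
  calc _ ≤ _ := abs_sum_le_sum_abs _ _
    _ ≤ ∑ _σ : Equiv.Perm n, (Fintype.card n : R) * ε * a ^ (Fintype.card n - 1) := by
      refine sum_le_sum fun σ _ => ?_
      rw [← mul_sub, abs_mul, ← Int.cast_abs, Equiv.Perm.sign_abs, Int.cast_one, one_mul]
      exact abs_prod_sub_prod_le univ (fun i _ => hM _ _) (fun i _ => hN _ _)
        fun i _ => hMN _ _
    _ = _ := by rw [sum_const, card_univ, Fintype.card_perm, nsmul_eq_mul]; ring

theorem Matrix.one_le_abs_det_of_isInt {n : Type*} [Fintype n] [DecidableEq n] {M : Matrix n n R}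
    (hM : ∀ i j, ∃ z : ℤ, M i j = z) (hdet : M.det ≠ 0) : 1 ≤ |M.det| := by
  choose Z hZ using hM
  have hcast : M.det = ((of Z).det : R) := by
    rw [show M = (Int.castRingHom R).mapMatrix (of Z) by ext; simp [hZ], ← RingHom.map_det]
    rfl
  rw [hcast] at hdet ⊢
  exact_mod_cast Int.one_le_abs (by exact_mod_cast hdet)

end OrderedRing

theorem Matrix.exists_inv_le_abs_sub_of_rank_lt {K m n : Type*} [Field K] [LinearOrder K]
    [IsStrictOrderedRing K] [Fintype m] [Fintype n] {A G : Matrix m n K} {k : ℕ} {b : K}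
    (hA : ∀ i j, ∃ z : ℤ, A i j = z) (hb : ∀ i j, |A i j| ≤ b) (hk : k < A.rank)
    (hG : G.rank ≤ k) :
    ∃ i j, ((k + 1).factorial * (k + 1) * (b + 1) ^ k : K)⁻¹ ≤ |A i j - G i j| := by
  classical
  obtain ⟨r, c, hdetA⟩ := A.exists_det_submatrix_ne_zero_of_le_rank (s := k + 1) hk
  have hdetG : (G.submatrix r c).det = 0 := by
    by_contra h
    have := (rank_of_det_ne_zero h).symm.trans_le ((G.rank_submatrix_le r c).trans hG)
    simp at this
  have : Nonempty (m × n) := ⟨(r 0, c 0)⟩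
  obtain ⟨⟨i₀, j₀⟩, hmax⟩ := Finite.exists_max fun x : m × n => |A x.1 x.2 - G x.1 x.2|
  refine ⟨i₀, j₀, ?_⟩
  set ε := |A i₀ j₀ - G i₀ j₀|
  have hb₀ : 0 ≤ b := (abs_nonneg _).trans (hb i₀ j₀)
  have hQ : (1 : K) ≤ (k + 1).factorial * (k + 1) * (b + 1) ^ k := by
    refine one_le_mul_of_one_le_of_one_le (one_le_mul_of_one_le_of_one_le ?_ ?_) ?_
    · exact_mod_cast (k + 1).factorial_pos
    · simp
    · exact one_le_pow₀ (by linarith)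
  rcases le_or_gt ε 1 with hε | hε
  · have hGb : ∀ i j, |G i j| ≤ b + 1 := fun i j => by
      have h₁ := abs_sub_abs_le_abs_sub (G i j) (A i j)
      have h₂ : |A i j - G i j| ≤ ε := hmax (i, j)
      rw [abs_sub_comm] at h₁
      linarith [hb i j]
    have hdet := abs_det_sub_det_le (M := A.submatrix r c) (N := G.submatrix r c)
      (fun i j => (hb _ _).trans (by linarith)) (fun i j => hGb _ _) (fun i j => hmax (r i, c j))
    rw [hdetG, sub_zero, Fintype.card_fin, Nat.add_sub_cancel] at hdet
    have hone := (one_le_abs_det_of_isInt (fun i j => hA _ _) hdetA).trans hdet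
    rw [inv_le_iff_one_le_mul₀' (by linarith)]
    push_cast at hone
    linarith
  · exact (inv_le_one_of_one_le₀ hQ).trans hε.le

theorem Nat.factorial_mul_mul_pow_le {k B N : ℕ} (hk : 1 ≤ k) (hB : 1 ≤ B) (hN : k + 1 ≤ N) :
    (k + 1).factorial * (k + 1) * (2 ^ B + 1) ^ k ≤ N ^ (3 * k) * 2 ^ (3 * k * B) :=
  calc (k + 1).factorial * (k + 1) * (2 ^ B + 1) ^ k
      ≤ (k + 1) ^ (k + 1) * (k + 1) * (2 ^ (B + 1)) ^ k := by
        gcongr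
        · exact Nat.factorial_le_pow _
        · rw [pow_succ]; linarith [Nat.one_le_two_pow (n := B)]
    _ = (k + 1) ^ (k + 2) * 2 ^ ((B + 1) * k) := by ring
    _ ≤ N ^ (3 * k) * 2 ^ (3 * k * B) :=
        Nat.mul_le_mul
          ((Nat.pow_le_pow_left hN _).trans (Nat.pow_le_pow_right (by omega) (by omega)))
          (Nat.pow_le_pow_right (by norm_num) (by nlinarith))

theorem opt_lower_bound_rank_k_general (p : ℕ) (hp : 2 ≤ p) :
    ∃ C : ℝ, 0 < C ∧
      ∀ (n m k B : ℕ), 1 ≤ n → 1 ≤ m → 1 ≤ k → 1 ≤ B →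
      ∀ A : Matrix (Fin n) (Fin m) ℝ,
        (∀ i j, ∃ z : ℤ, A i j = (z : ℝ)) →
        (∀ i j, |A i j| ≤ 2 ^ B) →
        k < A.rank →
        ∀ G : Matrix (Fin n) (Fin m) ℝ, G.rank ≤ k →
          ((n * m : ℕ) : ℝ) ^ (-(C * (k : ℝ))) * (2 : ℝ) ^ (-(C * (k : ℝ) * (B : ℝ)))
            ≤ ∑ i, ∑ j, |A i j - G i j| ^ p := by
  refine ⟨3 * p, mul_pos three_pos (Nat.cast_pos.mpr (by omega)),
    fun n m k B _ hm hk hB A hA hAB hrank G hG => ?_⟩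
  obtain ⟨i, j, hij⟩ := A.exists_inv_le_abs_sub_of_rank_lt hA hAB hrank hG
  have hkn : k + 1 ≤ n * m :=
    (hrank.trans_le (A.rank_le_card_height.trans_eq (Fintype.card_fin n))).trans_le
      (Nat.le_mul_of_pos_right n hm)
  have hQ : ((k + 1).factorial * (k + 1) * (2 ^ B + 1) ^ k : ℝ)
      ≤ ((n * m : ℕ) : ℝ) ^ (3 * k) * 2 ^ (3 * k * B) := by
    exact_mod_cast Nat.factorial_mul_mul_pow_le hk hB hkn
  have hrpow : ∀ x : ℝ, 0 ≤ x → ∀ e : ℕ, x ^ (-(e : ℝ)) = (x ^ e)⁻¹ := fun x hx e => by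
    rw [Real.rpow_neg hx, Real.rpow_natCast]
  calc ((n * m : ℕ) : ℝ) ^ (-(3 * (p : ℝ) * k)) * (2 : ℝ) ^ (-(3 * (p : ℝ) * k * B))
      = (((((n * m : ℕ) : ℝ) ^ (3 * k) * 2 ^ (3 * k * B))) ^ p)⁻¹ := by
        rw [show (3 * (p : ℝ) * k * B) = ((3 * k * B * p : ℕ) : ℝ) by push_cast; ring,
          show (3 * (p : ℝ) * k) = ((3 * k * p : ℕ) : ℝ) by push_cast; ring,
          hrpow _ (by positivity), hrpow _ (by positivity), mul_pow, ← pow_mul, ← pow_mul, mul_inv]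
    _ ≤ (((k + 1).factorial * (k + 1) * (2 ^ B + 1) ^ k : ℝ) ^ p)⁻¹ :=
        inv_anti₀ (by positivity) (pow_le_pow_left₀ (by positivity) hQ p)
    _ ≤ |A i j - G i j| ^ p := by
        rw [← inv_pow]
        exact pow_le_pow_left₀ (by positivity) hij p
    _ ≤ ∑ i, ∑ j, |A i j - G i j| ^ p :=
        (single_le_sum (fun _ _ => by positivity) (mem_univ j)).trans
          (single_le_sum (f := fun i => ∑ j, |A i j - G i j| ^ p) (fun _ _ => by positivity)
            (mem_univ i))

/-- **Lower bound on the optimal rank-`k` ℓ_p approximation error for bounded-bit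
matrices.**  For every even `p ≥ 2` there is `C_p > 0` such that any integer matrix `A`
with entries of magnitude at most `2^B` and rank greater than `k` satisfies
`‖A − G‖_p^p ≥ (nm)^{−C_p·k}·2^{−C_p·k·B}` for every matrix `G` of rank at most `k`. -/
theorem opt_lower_bound_rank_k (p : ℕ) (hpe : Even p) (hp : 2 ≤ p) :
    ∃ C : ℝ, 0 < C ∧
      ∀ (n m k B : ℕ), 1 ≤ n → 1 ≤ m → 1 ≤ k → 1 ≤ B →
      ∀ A : Matrix (Fin n) (Fin m) ℝ,
        (∀ i j, ∃ z : ℤ, A i j = (z : ℝ)) →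
        (∀ i j, |A i j| ≤ 2 ^ B) →
        k < A.rank →
        ∀ G : Matrix (Fin n) (Fin m) ℝ, G.rank ≤ k →
          ((n * m : ℕ) : ℝ) ^ (-(C * (k : ℝ))) * (2 : ℝ) ^ (-(C * (k : ℝ) * (B : ℝ)))
            ≤ ∑ i, ∑ j, |A i j - G i j| ^ p :=
  opt_lower_bound_rank_k_general p hp
end

section
/- For every even integer p ≥ 2 and every real K ≥ 1 there is a constant C > 0 with the following property. Let A ∈ ℝ^{n×m} and write ‖A‖_p = (∑_{i,j} |A_{ij}|^p)^{1/p}. Let u, ũ ∈ ℝⁿ and v, ṽ ∈ ℝᵐ satisfy ‖u‖_p ≤ K·‖A‖_p^{1/2}, ‖v‖_p ≤ K·‖A‖_p^{1/2}, ‖ũ‖_p ≤ K·‖A‖_p^{1/2}, ‖ṽ‖_p ≤ K·‖A‖_p^{1/2}, and let γ be a real number with 0 ≤ γ ≤ ‖A‖_p^{1/2}, such that |u_i − ũ_i| ≤ γ for all i and |v_j − ṽ_j| ≤ γ for all j. Then ∑_{i,j} (A_{ij} − u_i·v_j)^p ≤ ∑_{i,j} (A_{ij} − ũ_i·ṽ_j)^p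 + C · n·m · γ · ‖A‖_p^{(2p−1)/2}. -/
open Matrix

/-- The entrywise ℓ_p norm of a matrix: `‖M‖_p = (∑_{i,j} |M_{ij}|^p)^{1/p}`. -/
noncomputable def matLpNorm (p : ℕ) {n m : ℕ} (M : Matrix (Fin n) (Fin m) ℝ) : ℝ :=
  (∑ i, ∑ j, |M i j| ^ p) ^ (1 / (p : ℝ))

/-- The ℓ_p norm of a vector: `‖x‖_p = (∑_i |x_i|^p)^{1/p}`. -/
noncomputable def vecLpNorm (p : ℕ) {n : ℕ} (x : Fin n → ℝ) : ℝ :=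
  (∑ i, |x i| ^ p) ^ (1 / (p : ℝ))

open Finset

lemma pow_sub_pow_le_aux (p : ℕ) (x y B : ℝ) (hx : |x| ≤ B) (hy : |y| ≤ B) :
    x ^ p - y ^ p ≤ p * B ^ (p - 1) * |x - y| := by
  have hB : 0 ≤ B := (abs_nonneg x).trans hx
  have hsum : |∑ i ∈ range p, x ^ i * y ^ (p - 1 - i)| ≤ ∑ _i ∈ range p, B ^ (p - 1) := by
    refine (Finset.abs_sum_le_sum_abs _ _).trans (Finset.sum_le_sum ?_)
    intro i hi
    rw [abs_mul, abs_pow, abs_pow]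
    calc |x| ^ i * |y| ^ (p - 1 - i) ≤ B ^ i * B ^ (p - 1 - i) :=
          mul_le_mul (pow_le_pow_left₀ (abs_nonneg _) hx i)
            (pow_le_pow_left₀ (abs_nonneg _) hy _) (by positivity) (by positivity)
      _ = B ^ (p - 1) := by
          rw [← pow_add]; congr 1; simp at hi; omega
  calc x ^ p - y ^ p ≤ |x ^ p - y ^ p| := le_abs_self _
    _ = |∑ i ∈ range p, x ^ i * y ^ (p - 1 - i)| * |x - y| := by
        rw [← geom_sum₂_mul, abs_mul]
    _ ≤ (∑ _i ∈ range p, B ^ (p - 1)) * |x - y| :=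
        mul_le_mul_of_nonneg_right hsum (abs_nonneg _)
    _ = p * B ^ (p - 1) * |x - y| := by
        rw [Finset.sum_const, Finset.card_range, nsmul_eq_mul]

lemma entry_le (p : ℕ) (hp : 2 ≤ p) {n : ℕ} (x : Fin n → ℝ) (i : Fin n) :
    |x i| ≤ vecLpNorm p x := by
  have hp0 : (p : ℝ) ≠ 0 := by positivity
  have h1 : |x i| ^ p ≤ ∑ j, |x j| ^ p :=
    Finset.single_le_sum (f := fun j => |x j| ^ p) (fun j _ => by positivity)
      (Finset.mem_univ i)
  have := Real.rpow_le_rpow (by positivity) h1 (by positivity : (0:ℝ) ≤ 1 / p)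
  calc |x i| = (|x i| ^ p) ^ (1 / (p:ℝ)) := by
        rw [← Real.rpow_natCast (|x i|) p, ← Real.rpow_mul (abs_nonneg _),
          mul_one_div, div_self hp0, Real.rpow_one]
    _ ≤ vecLpNorm p x := this

/-- **Discretization error bound for rank-one ℓ_p LRA.**  For every even `p ≥ 2` and
`K ≥ 1` there is `C > 0` such that, if `u, v` have ℓ_p norms at most `K·‖A‖_p^{1/2}` and
`uT, vT` are entrywise within `γ ≤ ‖A‖_p^{1/2}` of `u, v`, then
`∑(A_{ij} − uᵢvⱼ)^p ≤ ∑(A_{ij} − uTᵢvTⱼ)^p + C·n·m·γ·‖A‖_p^{(2p−1)/2}`. -/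
theorem discretization_error_bound (p : ℕ) (hpe : Even p) (hp : 2 ≤ p)
    (K : ℝ) (hK : 1 ≤ K) :
    ∃ C : ℝ, 0 < C ∧
      ∀ (n m : ℕ) (A : Matrix (Fin n) (Fin m) ℝ)
        (u uT : Fin n → ℝ) (v vT : Fin m → ℝ) (γ : ℝ),
        vecLpNorm p u ≤ K * matLpNorm p A ^ ((1 : ℝ) / 2) →
        vecLpNorm p v ≤ K * matLpNorm p A ^ ((1 : ℝ) / 2) →
        vecLpNorm p uT ≤ K * matLpNorm p A ^ ((1 : ℝ) / 2) →
        vecLpNorm p vT ≤ K * matLpNorm p A ^ ((1 : ℝ) / 2) →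
        0 ≤ γ → γ ≤ matLpNorm p A ^ ((1 : ℝ) / 2) →
        (∀ i, |u i - uT i| ≤ γ) → (∀ j, |v j - vT j| ≤ γ) →
        (∑ i, ∑ j, (A i j - u i * v j) ^ p)
          ≤ (∑ i, ∑ j, (A i j - uT i * vT j) ^ p)
            + C * n * m * γ * matLpNorm p A ^ ((2 * (p : ℝ) - 1) / 2) := by
  have hK0 : 0 < K := lt_of_lt_of_le one_pos hK
  refine ⟨2 * p * K * (1 + K ^ 2) ^ (p - 1), by positivity, ?_⟩
  intro n m A u uT v vT γ hu hv huT hvT hγ0 hγN hud hvd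
  set N : ℝ := matLpNorm p A with hNdef
  have hN0 : 0 ≤ N := by
    rw [hNdef, matLpNorm]
    positivity
  rcases eq_or_lt_of_le hN0 with hN | hNpos
  · -- N = 0 case
    have hNh : N ^ ((1:ℝ)/2) = 0 := by
      rw [← hN, Real.zero_rpow (by norm_num)]
    have hγ : γ = 0 := le_antisymm (by rw [← hNh]; exact hγN) hγ0
    have hu' : u = uT := by
      funext i
      have := hud i; rw [hγ] at this
      have := abs_nonpos_iff.mp this
      linarith [sub_eq_zero.mp this]
    have hv' : v = vT := by
      funext j
      have := hvd j; rw [hγ] at this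
      have := abs_nonpos_iff.mp this
      linarith [sub_eq_zero.mp this]
    rw [hu', hv', hγ]
    simp
  · -- N > 0 case
    have hp0 : (p : ℝ) ≠ 0 := by positivity
    -- entries of A bounded by N
    have hA : ∀ i j, |A i j| ≤ N := by
      intro i j
      have h1 : |A i j| ^ p ≤ ∑ i, ∑ j, |A i j| ^ p := by
        calc |A i j| ^ p ≤ ∑ j', |A i j'| ^ p :=
              Finset.single_le_sum (f := fun j' => |A i j'| ^ p)
                (fun _ _ => by positivity) (Finset.mem_univ j)
          _ ≤ ∑ i', ∑ j', |A i' j'| ^ p :=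
              Finset.single_le_sum (f := fun i' => ∑ j', |A i' j'| ^ p)
                (fun _ _ => by positivity) (Finset.mem_univ i)
      have := Real.rpow_le_rpow (by positivity) h1 (by positivity : (0:ℝ) ≤ 1 / p)
      calc |A i j| = (|A i j| ^ p) ^ (1 / (p:ℝ)) := by
            rw [← Real.rpow_natCast (|A i j|) p, ← Real.rpow_mul (abs_nonneg _),
              mul_one_div, div_self hp0, Real.rpow_one]
        _ ≤ N := this
    set R : ℝ := N ^ ((1:ℝ)/2) with hRdef
    have hR0 : 0 ≤ R := Real.rpow_nonneg hN0 _
    have hRR : R * R = N := by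
      rw [hRdef, ← Real.rpow_add hNpos]; norm_num
    have hub : ∀ i, |u i| ≤ K * R := fun i => (entry_le p hp u i).trans hu
    have hvb : ∀ j, |v j| ≤ K * R := fun j => (entry_le p hp v j).trans hv
    have hvTb : ∀ j, |vT j| ≤ K * R := fun j => (entry_le p hp vT j).trans hvT
    set B : ℝ := (1 + K ^ 2) * N with hBdef
    have hB0 : 0 ≤ B := by positivity
    -- per-entry bound
    have key : ∀ i j, (A i j - u i * v j) ^ p ≤ (A i j - uT i * vT j) ^ p
        + p * B ^ (p - 1) * (2 * K * R * γ) := by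
      intro i j
      have huTb : |uT i| ≤ K * R := (entry_le p hp uT i).trans huT
      have hKR : (K * R) * (K * R) = K ^ 2 * N := by
        calc (K * R) * (K * R) = K ^ 2 * (R * R) := by ring
          _ = K ^ 2 * N := by rw [hRR]
      have hx : |A i j - u i * v j| ≤ B := by
        have h1 : |u i * v j| ≤ (K * R) * (K * R) := by
          rw [abs_mul]
          exact mul_le_mul (hub i) (hvb j) (abs_nonneg _) (by positivity)
        have h2 := (abs_sub (A i j) (u i * v j)).trans (add_le_add (hA i j) h1)
        rw [hBdef]; rw [hKR] at h2; linarith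
      have hy : |A i j - uT i * vT j| ≤ B := by
        have h1 : |uT i * vT j| ≤ (K * R) * (K * R) := by
          rw [abs_mul]
          exact mul_le_mul huTb (hvTb j) (abs_nonneg _) (by positivity)
        have h2 := (abs_sub (A i j) (uT i * vT j)).trans (add_le_add (hA i j) h1)
        rw [hBdef]; rw [hKR] at h2; linarith
      have hd : |(A i j - u i * v j) - (A i j - uT i * vT j)| ≤ 2 * K * R * γ := by
        have : (A i j - u i * v j) - (A i j - uT i * vT j)
            = -(u i * (v j - vT j) + (u i - uT i) * vT j) := by ring
        rw [this, abs_neg]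
        calc |u i * (v j - vT j) + (u i - uT i) * vT j|
            ≤ |u i * (v j - vT j)| + |(u i - uT i) * vT j| := abs_add_le _ _
          _ = |u i| * |v j - vT j| + |u i - uT i| * |vT j| := by
              rw [abs_mul, abs_mul]
          _ ≤ (K * R) * γ + γ * (K * R) :=
              add_le_add (mul_le_mul (hub i) (hvd j) (abs_nonneg _) (by positivity))
                (mul_le_mul (hud i) (hvTb j) (abs_nonneg _) hγ0)
          _ = 2 * K * R * γ := by ring
      have h1 := pow_sub_pow_le_aux p (A i j - u i * v j) (A i j - uT i * vT j) B hx hy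
      have h2 : (p:ℝ) * B ^ (p - 1) * |(A i j - u i * v j) - (A i j - uT i * vT j)|
          ≤ p * B ^ (p - 1) * (2 * K * R * γ) :=
        mul_le_mul_of_nonneg_left hd (by positivity)
      linarith
    have sum_bound : (∑ i, ∑ j, (A i j - u i * v j) ^ p)
        ≤ (∑ i, ∑ j, (A i j - uT i * vT j) ^ p)
          + n * m * (p * B ^ (p - 1) * (2 * K * R * γ)) := by
      have h1 : (∑ i, ∑ j, (A i j - u i * v j) ^ p)
          ≤ ∑ i : Fin n, ∑ j : Fin m, ((A i j - uT i * vT j) ^ p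
            + p * B ^ (p - 1) * (2 * K * R * γ)) :=
        Finset.sum_le_sum fun i _ => Finset.sum_le_sum fun j _ => key i j
      have h2 : ∑ i : Fin n, ∑ j : Fin m, ((A i j - uT i * vT j) ^ p
            + (p:ℝ) * B ^ (p - 1) * (2 * K * R * γ))
          = (∑ i, ∑ j, (A i j - uT i * vT j) ^ p)
            + n * m * (p * B ^ (p - 1) * (2 * K * R * γ)) := by
        simp [Finset.sum_add_distrib, Finset.mul_sum]
        ring
      linarith
    -- rewrite the error term
    have hfinal : (n:ℝ) * m * (p * B ^ (p - 1) * (2 * K * R * γ))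
        = 2 * p * K * (1 + K ^ 2) ^ (p - 1) * n * m * γ * N ^ ((2 * (p:ℝ) - 1) / 2) := by
      have hNp : N ^ (p - 1) * R = N ^ ((2 * (p:ℝ) - 1) / 2) := by
        rw [hRdef, ← Real.rpow_natCast N (p - 1), ← Real.rpow_add hNpos]
        congr 1
        have : ((p - 1 : ℕ) : ℝ) = (p : ℝ) - 1 := by
          have : (1:ℕ) ≤ p := by omega
          push_cast [this]; ring
        rw [this]; ring
      rw [hBdef, mul_pow, ← hNp]
      ring
    calc (∑ i, ∑ j, (A i j - u i * v j) ^ p)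
        ≤ (∑ i, ∑ j, (A i j - uT i * vT j) ^ p)
          + n * m * (p * B ^ (p - 1) * (2 * K * R * γ)) := sum_bound
      _ = (∑ i, ∑ j, (A i j - uT i * vT j) ^ p)
          + 2 * p * K * (1 + K ^ 2) ^ (p - 1) * n * m * γ * N ^ ((2 * (p:ℝ) - 1) / 2) := by
          rw [hfinal]
end

section
/- For every even integer p ≥ 2 there is a constant C_p > 0 with the following property. Let A ∈ ℝ^{n×m}, let X, X̃ ∈ ℝ^{n×k} and Y, Ỹ ∈ ℝ^{m×k} be matrices with ‖X − X̃‖_∞ ≤ γ and ‖Y − Ỹ‖_∞ ≤ γ for some real γ ≥ 0, and set α := ‖X‖_∞ + ‖Y‖_∞ + γ. Then ‖A − X̃Ỹ^⊤‖_p^p ≤ ‖A − XY^⊤‖_p^p + C_p · n·m · ( ‖A − XY^⊤‖_p^{p−1} · k · γ · α + k^p · γ^p · α^p ), where ‖A − XY^⊤‖_p^{p−1} = ( ∑_{i,j} |A_{ij} − (XY^⊤)_{ij}|^p )^{(p−1)/p}. -/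
open Matrix

def lpPow (p : ℕ) {n m : ℕ} (M : Matrix (Fin n) (Fin m) ℝ) : ℝ :=
  ∑ i, ∑ j, |M i j| ^ p

noncomputable def linf {n m : ℕ} (M : Matrix (Fin n) (Fin m) ℝ) : ℝ :=
  ⨆ i, ⨆ j, |M i j|

lemma linf_nonneg {n m : ℕ} (M : Matrix (Fin n) (Fin m) ℝ) : 0 ≤ linf M :=
  Real.iSup_nonneg fun _ => Real.iSup_nonneg fun _ => abs_nonneg _

lemma abs_le_linf {n m : ℕ} (M : Matrix (Fin n) (Fin m) ℝ) (i : Fin n) (j : Fin m) :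
    |M i j| ≤ linf M := by
  refine le_trans (le_ciSup (f := fun j => |M i j|) (Set.finite_range _).bddAbove j) ?_
  exact le_ciSup (f := fun i => ⨆ j, |M i j|) (Set.finite_range _).bddAbove i

lemma pow_add_le_aux (p : ℕ) (hp : 1 ≤ p) {a b : ℝ} (ha : 0 ≤ a) (hb : 0 ≤ b) :
    (a + b) ^ p ≤ a ^ p + (p : ℝ) * 2 ^ p * (a ^ (p - 1) * b + b ^ p) := by
  have hid : (a + b) ^ p = a ^ p + (∑ i ∈ Finset.range p, (a + b) ^ i * a ^ (p - 1 - i)) * b := by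
    have := geom_sum₂_mul (a + b) a p
    have h2 : (a + b) - a = b := by ring
    rw [h2] at this
    linarith [this]
  have hsum : (∑ i ∈ Finset.range p, (a + b) ^ i * a ^ (p - 1 - i))
      ≤ (p : ℝ) * (a + b) ^ (p - 1) := by
    calc (∑ i ∈ Finset.range p, (a + b) ^ i * a ^ (p - 1 - i))
        ≤ ∑ i ∈ Finset.range p, (a + b) ^ (p - 1) := by
          refine Finset.sum_le_sum fun i hi => ?_
          have hi' : i < p := Finset.mem_range.mp hi
          calc (a + b) ^ i * a ^ (p - 1 - i)
              ≤ (a + b) ^ i * (a + b) ^ (p - 1 - i) := by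
                apply mul_le_mul_of_nonneg_left (pow_le_pow_left₀ ha (by linarith) _)
                  (pow_nonneg (by linarith) _)
            _ = (a + b) ^ (p - 1) := by rw [← pow_add]; congr 1; omega
      _ = (p : ℝ) * (a + b) ^ (p - 1) := by
          rw [Finset.sum_const, Finset.card_range, nsmul_eq_mul]
  have hmax : (a + b) ^ (p - 1) ≤ 2 ^ p * (a ^ (p - 1) + b ^ (p - 1)) := by
    have h1 : a + b ≤ 2 * max a b := by
      rcases le_total a b with h | h
      · simp [max_eq_right h]; linarith
      · simp [max_eq_left h]; linarith
    calc (a + b) ^ (p - 1) ≤ (2 * max a b) ^ (p - 1) :=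
          pow_le_pow_left₀ (by linarith) h1 _
      _ = 2 ^ (p - 1) * (max a b) ^ (p - 1) := by rw [mul_pow]
      _ ≤ 2 ^ p * (a ^ (p - 1) + b ^ (p - 1)) := by
          have hm : (max a b) ^ (p - 1) ≤ a ^ (p - 1) + b ^ (p - 1) := by
            rcases le_total a b with h | h
            · rw [max_eq_right h]; nlinarith [pow_nonneg ha (p-1)]
            · rw [max_eq_left h]; nlinarith [pow_nonneg hb (p-1)]
          have h2 : (2:ℝ) ^ (p-1) ≤ 2 ^ p := pow_le_pow_right₀ (by norm_num) (by omega)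
          have h3 : (0:ℝ) ≤ (max a b) ^ (p - 1) :=
            pow_nonneg (le_trans ha (le_max_left a b)) _
          exact mul_le_mul h2 hm h3 (by positivity)
  have hbp : b ^ (p - 1) * b = b ^ p := by
    rw [← pow_succ]; congr 1; omega
  have hsumnn : (0:ℝ) ≤ ∑ i ∈ Finset.range p, (a + b) ^ i * a ^ (p - 1 - i) := by
    exact Finset.sum_nonneg fun i _ => mul_nonneg (pow_nonneg (by linarith) _) (pow_nonneg ha _)
  calc (a + b) ^ p = a ^ p + (∑ i ∈ Finset.range p, (a + b) ^ i * a ^ (p - 1 - i)) * b := hid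
    _ ≤ a ^ p + (p : ℝ) * (a + b) ^ (p - 1) * b := by
        nlinarith [mul_le_mul_of_nonneg_right hsum hb]
    _ ≤ a ^ p + (p : ℝ) * (2 ^ p * (a ^ (p - 1) + b ^ (p - 1))) * b := by
        have hp0 : (0:ℝ) ≤ (p:ℝ) := Nat.cast_nonneg p
        nlinarith [mul_le_mul_of_nonneg_right (mul_le_mul_of_nonneg_left hmax hp0) hb]
    _ = a ^ p + (p : ℝ) * 2 ^ p * (a ^ (p - 1) * b + b ^ (p - 1) * b) := by ring
    _ = a ^ p + (p : ℝ) * 2 ^ p * (a ^ (p - 1) * b + b ^ p) := by rw [hbp]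

/-- **Discretization error bound for rank-`k` ℓ_p LRA.**  For every even `p ≥ 2` there is
`C_p > 0` such that if `‖X − X̃‖_∞ ≤ γ`, `‖Y − Ỹ‖_∞ ≤ γ` and `α = ‖X‖_∞ + ‖Y‖_∞ + γ`,
then `‖A − X̃Ỹᵀ‖_p^p ≤ ‖A − XYᵀ‖_p^p +
C_p·n·m·(‖A − XYᵀ‖_p^{p−1}·k·γ·α + k^p·γ^p·α^p)`. -/
theorem rank_k_discretization_bound (p : ℕ) (hpe : Even p) (hp : 2 ≤ p) :
    ∃ C : ℝ, 0 < C ∧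
      ∀ (n m k : ℕ) (A : Matrix (Fin n) (Fin m) ℝ)
        (X XT : Matrix (Fin n) (Fin k) ℝ) (Y YT : Matrix (Fin m) (Fin k) ℝ) (γ : ℝ),
        0 ≤ γ → linf (X - XT) ≤ γ → linf (Y - YT) ≤ γ →
        lpPow p (A - XT * YTᵀ)
          ≤ lpPow p (A - X * Yᵀ)
            + C * n * m *
              ((lpPow p (A - X * Yᵀ)) ^ (((p : ℝ) - 1) / p) * k * γ * (linf X + linf Y + γ)
                + (k : ℝ) ^ p * γ ^ p * (linf X + linf Y + γ) ^ p) := by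
  refine ⟨(p : ℝ) * 2 ^ p, by positivity, ?_⟩
  intro n m k A X XT Y YT γ hγ hX hY
  set α : ℝ := linf X + linf Y + γ with hα
  have hαnn : 0 ≤ α := by
    have := linf_nonneg X; have := linf_nonneg Y; simp only [hα]; linarith
  set δ : ℝ := (k : ℝ) * γ * α with hδ
  have hδnn : 0 ≤ δ := by positivity
  set S : ℝ := lpPow p (A - X * Yᵀ) with hS
  have hSnn : 0 ≤ S := by
    refine Finset.sum_nonneg fun i _ => Finset.sum_nonneg fun j _ => pow_nonneg (abs_nonneg _) p
  set Sr : ℝ := S ^ (((p : ℝ) - 1) / p) with hSr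
  have hSrnn : 0 ≤ Sr := Real.rpow_nonneg hSnn _
  -- entrywise bound
  have hub : ∀ i j, |(A - XT * YTᵀ) i j| ≤ |(A - X * Yᵀ) i j| + δ := by
    intro i j
    have h1 : (A - XT * YTᵀ) i j
        = (A - X * Yᵀ) i j + ∑ l, (X i l * (Y j l - YT j l) + (X i l - XT i l) * YT j l) := by
      simp only [Matrix.sub_apply, Matrix.mul_apply, Matrix.transpose_apply]
      rw [Finset.sum_add_distrib]
      have : ∀ l, X i l * (Y j l - YT j l) = X i l * Y j l - X i l * YT j l := fun l => by ring
      simp only [this, fun l : Fin k => show (X i l - XT i l) * YT j l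
        = X i l * YT j l - XT i l * YT j l by ring]
      rw [Finset.sum_sub_distrib, Finset.sum_sub_distrib]
      ring
    have h2 : |∑ l, (X i l * (Y j l - YT j l) + (X i l - XT i l) * YT j l)| ≤ δ := by
      calc |∑ l, (X i l * (Y j l - YT j l) + (X i l - XT i l) * YT j l)|
          ≤ ∑ l, |X i l * (Y j l - YT j l) + (X i l - XT i l) * YT j l| :=
            Finset.abs_sum_le_sum_abs _ _
        _ ≤ ∑ _l : Fin k, γ * α := by
            refine Finset.sum_le_sum fun l _ => ?_
            have hXl : |X i l| ≤ linf X := abs_le_linf X i l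
            have hYd : |Y j l - YT j l| ≤ γ :=
              le_trans (abs_le_linf (Y - YT) j l) hY
            have hXd : |X i l - XT i l| ≤ γ :=
              le_trans (abs_le_linf (X - XT) i l) hX
            have hYTl : |YT j l| ≤ linf Y + γ := by
              have h4 : |YT j l| ≤ |Y j l| + |Y j l - YT j l| := by
                calc |YT j l| = |Y j l - (Y j l - YT j l)| := by congr 1; ring
                  _ ≤ |Y j l| + |Y j l - YT j l| := abs_sub _ _
              linarith [abs_le_linf Y j l]
            calc |X i l * (Y j l - YT j l) + (X i l - XT i l) * YT j l|
                ≤ |X i l| * |Y j l - YT j l| + |X i l - XT i l| * |YT j l| := by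
                  refine le_trans (abs_add_le _ _) ?_
                  rw [abs_mul, abs_mul]
              _ ≤ linf X * γ + γ * (linf Y + γ) := by
                  have h0X := linf_nonneg X
                  have h0 := abs_nonneg (X i l)
                  have h1' := abs_nonneg (Y j l - YT j l)
                  have h2' := abs_nonneg (X i l - XT i l)
                  have h3' := abs_nonneg (YT j l)
                  have hYnn := linf_nonneg Y
                  nlinarith
              _ = γ * α := by simp only [hα]; ring
        _ = δ := by rw [Finset.sum_const, Finset.card_univ, Fintype.card_fin, nsmul_eq_mul, hδ]; ring
    calc |(A - XT * YTᵀ) i j|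
        = |(A - X * Yᵀ) i j + ∑ l, (X i l * (Y j l - YT j l) + (X i l - XT i l) * YT j l)| := by
          rw [h1]
      _ ≤ |(A - X * Yᵀ) i j| + |∑ l, (X i l * (Y j l - YT j l) + (X i l - XT i l) * YT j l)| :=
          abs_add_le _ _
      _ ≤ |(A - X * Yᵀ) i j| + δ := by linarith
  -- |e|^{p-1} ≤ Sr
  have hpow : ∀ i j, |(A - X * Yᵀ) i j| ^ (p - 1) ≤ Sr := by
    intro i j
    have hle : |(A - X * Yᵀ) i j| ^ p ≤ S := by
      have h1 : |(A - X * Yᵀ) i j| ^ p ≤ ∑ j', |(A - X * Yᵀ) i j'| ^ p :=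
        Finset.single_le_sum (f := fun j' => |(A - X * Yᵀ) i j'| ^ p)
          (fun j' _ => pow_nonneg (abs_nonneg _) p) (Finset.mem_univ j)
      refine h1.trans ?_
      exact Finset.single_le_sum (f := fun i' => ∑ j', |(A - X * Yᵀ) i' j'| ^ p)
        (fun i' _ => Finset.sum_nonneg fun j' _ => pow_nonneg (abs_nonneg _) p)
        (Finset.mem_univ i)
    have hpne : (p : ℝ) ≠ 0 := by positivity
    have habs : (0:ℝ) ≤ |(A - X * Yᵀ) i j| := abs_nonneg _
    have hrw : |(A - X * Yᵀ) i j| ^ (p - 1)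
        = (|(A - X * Yᵀ) i j| ^ p) ^ (((p : ℝ) - 1) / p) := by
      have e1 : (|(A - X * Yᵀ) i j| ^ p : ℝ) = |(A - X * Yᵀ) i j| ^ (p : ℝ) :=
        (Real.rpow_natCast _ p).symm
      have e2 : |(A - X * Yᵀ) i j| ^ (p - 1) = |(A - X * Yᵀ) i j| ^ (((p : ℝ)) - 1) := by
        rw [← Real.rpow_natCast |(A - X * Yᵀ) i j| (p - 1)]
        congr 1
        push_cast [Nat.cast_sub (by omega : 1 ≤ p)]
        ring
      rw [e2, e1, ← Real.rpow_mul habs]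
      congr 1
      field_simp
    rw [hrw, hSr]
    exact Real.rpow_le_rpow (pow_nonneg habs p) hle
      (div_nonneg (by push_cast; linarith [show (2:ℝ) ≤ p by exact_mod_cast hp]) (by positivity))
  -- pointwise full bound
  have key : ∀ i j, |(A - XT * YTᵀ) i j| ^ p
      ≤ |(A - X * Yᵀ) i j| ^ p + (p : ℝ) * 2 ^ p * (Sr * δ + δ ^ p) := by
    intro i j
    have h1 : |(A - XT * YTᵀ) i j| ^ p ≤ (|(A - X * Yᵀ) i j| + δ) ^ p :=
      pow_le_pow_left₀ (abs_nonneg _) (hub i j) p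
    have h2 := pow_add_le_aux p (by omega) (abs_nonneg ((A - X * Yᵀ) i j)) hδnn
    have h3 : |(A - X * Yᵀ) i j| ^ (p - 1) * δ ≤ Sr * δ :=
      mul_le_mul_of_nonneg_right (hpow i j) hδnn
    have hc : (0:ℝ) ≤ (p : ℝ) * 2 ^ p := by positivity
    nlinarith
  -- sum it up
  have hsum : lpPow p (A - XT * YTᵀ)
      ≤ S + (n : ℝ) * m * ((p : ℝ) * 2 ^ p * (Sr * δ + δ ^ p)) := by
    calc lpPow p (A - XT * YTᵀ)
        = ∑ i, ∑ j, |(A - XT * YTᵀ) i j| ^ p := rfl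
      _ ≤ ∑ i, ∑ j, (|(A - X * Yᵀ) i j| ^ p + (p : ℝ) * 2 ^ p * (Sr * δ + δ ^ p)) := by
          refine Finset.sum_le_sum fun i _ => Finset.sum_le_sum fun j _ => key i j
      _ = S + (n : ℝ) * m * ((p : ℝ) * 2 ^ p * (Sr * δ + δ ^ p)) := by
          simp only [Finset.sum_add_distrib, Finset.sum_const, Finset.card_univ,
            Fintype.card_fin, nsmul_eq_mul]
          rw [hS]; unfold lpPow; ring
  refine hsum.trans (le_of_eq ?_)
  have hδp : δ ^ p = (k : ℝ) ^ p * γ ^ p * α ^ p := by rw [hδ]; rw [mul_pow, mul_pow]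
  rw [hδp, hδ]
  ring
end

section
/- For every even integer p ≥ 2 there is a constant C_p > 0 with the following property. Let n, m ≥ 1, k ≥ 1, and B ≥ 1 be natural numbers, let A ∈ ℝ^{n×m} be a matrix with |A_{ij}| ≤ 2^B for all i, j, and let G ∈ ℝ^{n×m} be a matrix with rank(G) = k such that ‖A − G‖_p^p ≤ ‖A‖_p^p. Then there exist matrices X ∈ ℝ^{n×k} and Y ∈ ℝ^{m×k} with G = XY^⊤ such that max_{i,j} |X_{ij}| ≤ (n·m·k)^{C_p} · 2^{C_p·B} and max_{i,j} |Y_{ij}| ≤ (n·m·k)^{C_p} · 2^{C_p·B}. -/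
/-!
Since `‖A - G‖_p^p ≤ ‖A‖_p^p ≤ nm·2^{Bp}`, every entry of `G` is at most `(1 + nm)·2^B` in absolute
value. Fix `k` rows `r` of `G` along which some `k × k` minor is nonzero, and choose columns `c`
maximizing `|det G[r, c]|`. Then `G = G[:, c] · G[r, c]⁻¹ · G[r, :]`, and by Cramer's rule every entry
of `G[r, c]⁻¹ · G[r, :]` is a quotient of two minors along `r`, hence of absolute value at most `1`.
So `X = G[:, c]` and `Yᵀ = G[r, c]⁻¹ · G[r, :]` work with `C_p = 2`.
-/

open Matrix

namespace Matrix

theorem exists_eq_mul_of_col_mem_span {R m n ι : Type*} [CommSemiring R] [Fintype ι]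
    (M : Matrix m n R) (X : Matrix m ι R)
    (h : ∀ j, M.col j ∈ Submodule.span R (Set.range X.col)) :
    ∃ Z : Matrix ι n R, M = X * Z := by
  choose Z hZ using fun j => (Submodule.mem_span_range_iff_exists_fun R).mp (h j)
  refine ⟨of fun t j => Z j t, ext fun i j => ?_⟩
  simpa [mul_apply, Finset.sum_apply, mul_comm] using (congrFun (hZ j) i).symm

section Field

variable {K m n : Type*} [Field K] [Fintype m] [Fintype n]

theorem exists_linearIndependent_rows_of_rank_eq {k : ℕ} (M : Matrix m n K) (hM : M.rank = k) :
    ∃ r : Fin k → m, LinearIndependent K (M.submatrix r id).row := by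
  obtain ⟨κ, a, ha, hspan, hli⟩ := exists_linearIndependent' K M.row
  have : Fintype κ := Fintype.ofInjective a ha
  have hcard : Fintype.card κ = k := by
    rw [← finrank_span_eq_card hli, hspan, ← rank_eq_finrank_span_row, hM]
  let e : Fin k ≃ κ := (Fintype.equivFinOfCardEq hcard).symm
  exact ⟨a ∘ e, hli.comp e e.injective⟩

theorem exists_det_submatrix_ne_zero_of_rank_eq {k : ℕ} (M : Matrix m n K) (hM : M.rank = k) :
    ∃ (r : Fin k → m) (c : Fin k → n), (M.submatrix r c).det ≠ 0 := by
  obtain ⟨c, hc⟩ := Mᵀ.exists_linearIndependent_rows_of_rank_eq (k := k) (by rw [rank_transpose, hM])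
  have hcols : (M.submatrix id c).rank = k := by
    rw [← rank_transpose, transpose_submatrix, hc.rank_matrix, Fintype.card_fin]
  obtain ⟨r, hr⟩ := (M.submatrix id c).exists_linearIndependent_rows_of_rank_eq hcols
  exact ⟨r, c, (isUnit_iff_isUnit_det _).mp (linearIndependent_rows_iff_isUnit.mp hr) |>.ne_zero⟩

theorem eq_submatrix_mul_inv_mul_of_rank_eq {k : ℕ} (M : Matrix m n K) (hM : M.rank = k)
    {r : Fin k → m} {c : Fin k → n} (hdet : (M.submatrix r c).det ≠ 0) :
    M = M.submatrix id c * (M.submatrix r c)⁻¹ * M.submatrix r id := by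
  have hli : LinearIndependent K (M.submatrix id c).col :=
    LinearIndependent.of_comp (LinearMap.funLeft K K r) <|
      linearIndependent_cols_iff_isUnit.mpr ((isUnit_iff_isUnit_det _).mpr hdet.isUnit)
  have hspan : Submodule.span K (Set.range (M.submatrix id c).col) =
      Submodule.span K (Set.range M.col) := by
    refine Submodule.eq_of_le_of_finrank_eq
      (Submodule.span_mono (Set.range_subset_iff.mpr fun t => ⟨c t, rfl⟩)) ?_
    rw [finrank_span_eq_card hli, Fintype.card_fin, ← rank_eq_finrank_span_cols, hM]
  obtain ⟨Z, hZ⟩ := M.exists_eq_mul_of_col_mem_span (M.submatrix id c)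
    fun j => hspan ▸ Submodule.subset_span ⟨j, rfl⟩
  have hrows : M.submatrix r id = M.submatrix r c * Z := by
    conv_lhs => rw [hZ]
    simpa using submatrix_mul (M.submatrix id c) Z r id id Function.bijective_id
  rw [Matrix.mul_assoc, hrows, nonsing_inv_mul_cancel_left _ _ hdet.isUnit]
  exact hZ

end Field

section LinearOrderedField

variable {K m n : Type*} [Field K] [LinearOrder K] [IsStrictOrderedRing K]

theorem abs_inv_mul_submatrix_apply_le_one {k : ℕ} (M : Matrix m n K) {r : Fin k → m}
    {c : Fin k → n} (hdet : (M.submatrix r c).det ≠ 0)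
    (hmax : ∀ c' : Fin k → n, |(M.submatrix r c').det| ≤ |(M.submatrix r c).det|)
    (s : Fin k) (j : n) : |((M.submatrix r c)⁻¹ * M.submatrix r id) s j| ≤ 1 := by
  classical
  set S := M.submatrix r c
  have hcramer : S.det * (S⁻¹ * M.submatrix r id) s j =
      (M.submatrix r (Function.update c s j)).det := by
    have := congrFun (S.det_smul_inv_mulVec_eq_cramer (fun t => M (r t) j) hdet.isUnit) s
    rw [cramer_apply] at this
    convert this using 2
    · simp [mul_apply, mulVec, dotProduct]
    · ext t u
      rcases eq_or_ne u s with rfl | h <;> simp [S, *]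
  rw [← mul_le_mul_iff_right₀ (abs_pos.mpr hdet), mul_one, ← abs_mul, hcramer]
  exact hmax _

theorem exists_eq_submatrix_mul_transpose_abs_le_one [Fintype m] [Fintype n] {k : ℕ}
    (M : Matrix m n K) (hM : M.rank = k) :
    ∃ (c : Fin k → n) (Y : Matrix n (Fin k) K), M = M.submatrix id c * Yᵀ ∧ ∀ j s, |Y j s| ≤ 1 := by
  obtain ⟨r, c₀, hc₀⟩ := M.exists_det_submatrix_ne_zero_of_rank_eq hM
  have : Nonempty (Fin k → n) := ⟨c₀⟩
  obtain ⟨c, hc⟩ := Finite.exists_max fun c => |(M.submatrix r c).det|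
  have hdet : (M.submatrix r c).det ≠ 0 := abs_pos.mp ((abs_pos.mpr hc₀).trans_le (hc c₀))
  refine ⟨c, ((M.submatrix r c)⁻¹ * M.submatrix r id)ᵀ, ?_,
    fun j s => M.abs_inv_mul_submatrix_apply_le_one hdet hc s j⟩
  rw [transpose_transpose, ← Matrix.mul_assoc]
  exact M.eq_submatrix_mul_inv_mul_of_rank_eq hM hdet

end LinearOrderedField

end Matrix

theorem pow_abs_apply_le_lpPow (p : ℕ) {n m : ℕ} (M : Matrix (Fin n) (Fin m) ℝ) (i : Fin n)
    (j : Fin m) : |M i j| ^ p ≤ lpPow p M :=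
  calc |M i j| ^ p ≤ ∑ j', |M i j'| ^ p :=
        Finset.single_le_sum (f := fun j' => |M i j'| ^ p) (fun _ _ => by positivity)
          (Finset.mem_univ j)
    _ ≤ lpPow p M :=
        Finset.single_le_sum (f := fun i' => ∑ j', |M i' j'| ^ p)
          (fun _ _ => by positivity) (Finset.mem_univ i)

theorem lpPow_le_of_abs_le (p : ℕ) {n m : ℕ} {M : Matrix (Fin n) (Fin m) ℝ} {b : ℝ}
    (hM : ∀ i j, |M i j| ≤ b) : lpPow p M ≤ n * m * b ^ p := by
  calc lpPow p M ≤ ∑ _i : Fin n, ∑ _j : Fin m, b ^ p :=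
        Finset.sum_le_sum fun i _ => Finset.sum_le_sum fun j _ =>
          pow_le_pow_left₀ (abs_nonneg _) (hM i j) p
    _ = n * m * b ^ p := by simp [mul_assoc]

theorem abs_apply_le_of_lpPow_sub_le {p n m : ℕ} (hp : p ≠ 0) {A G : Matrix (Fin n) (Fin m) ℝ}
    {b : ℝ} (hA : ∀ i j, |A i j| ≤ b) (hAG : lpPow p (A - G) ≤ lpPow p A) (i : Fin n)
    (j : Fin m) : |G i j| ≤ (1 + n * m) * b := by
  have hb : 0 ≤ b := (abs_nonneg _).trans (hA i j)
  have hnm : (1 : ℝ) ≤ n * m := by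
    norm_cast; exact Nat.one_le_iff_ne_zero.mpr (Nat.mul_ne_zero i.pos.ne' j.pos.ne')
  have hsub : |(A - G) i j| ≤ n * m * b := by
    refine le_of_pow_le_pow_left₀ hp (by positivity) ?_
    calc |(A - G) i j| ^ p ≤ n * m * b ^ p :=
          (pow_abs_apply_le_lpPow p _ i j).trans (hAG.trans (lpPow_le_of_abs_le p hA))
      _ ≤ (n * m) ^ p * b ^ p := by gcongr; exact le_self_pow₀ hnm hp
      _ = (n * m * b) ^ p := (mul_pow _ _ _).symm
  calc |G i j| = |A i j - (A - G) i j| := by simp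
    _ ≤ |A i j| + |(A - G) i j| := abs_sub _ _
    _ ≤ (1 + n * m) * b := by linarith [hA i j]

theorem one_add_mul_mul_two_pow_le {n m k B : ℕ} (hn : 1 ≤ n) (hm : 1 ≤ m) (hk : 1 ≤ k)
    (hB : 1 ≤ B) :
    (1 + n * m : ℝ) * 2 ^ B ≤ ((n * m * k : ℕ) : ℝ) ^ (2 : ℝ) * (2 : ℝ) ^ (2 * (B : ℝ)) := by
  rw [Real.rpow_two, Real.rpow_mul zero_le_two, Real.rpow_two, Real.rpow_natCast, ← pow_mul,
    mul_comm 2 B, pow_mul]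
  have hnm : 1 ≤ n * m := Nat.mul_le_mul hn hm
  have hsq : n * m ≤ (n * m * k) ^ 2 :=
    (Nat.le_mul_of_pos_right _ hk).trans (Nat.le_self_pow two_ne_zero _)
  have h2B : 2 ≤ 2 ^ B := Nat.le_self_pow (by omega) 2
  have key : (1 + n * m) * 2 ^ B ≤ (n * m * k) ^ 2 * (2 ^ B) ^ 2 :=
    calc (1 + n * m) * 2 ^ B ≤ n * m * 2 * 2 ^ B := by gcongr; omega
      _ ≤ (n * m * k) ^ 2 * 2 ^ B * 2 ^ B := by gcongr
      _ = (n * m * k) ^ 2 * (2 ^ B) ^ 2 := by ring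
  exact_mod_cast key

theorem bounded_factorization_general (p : ℕ) (hp : 2 ≤ p) :
    ∃ C : ℝ, 0 < C ∧
      ∀ (n m k B : ℕ), 1 ≤ n → 1 ≤ m → 1 ≤ k → 1 ≤ B →
      ∀ A G : Matrix (Fin n) (Fin m) ℝ,
        (∀ i j, |A i j| ≤ 2 ^ B) →
        G.rank = k →
        lpPow p (A - G) ≤ lpPow p A →
        ∃ (X : Matrix (Fin n) (Fin k) ℝ) (Y : Matrix (Fin m) (Fin k) ℝ),
          G = X * Yᵀ ∧
          (∀ i j, |X i j| ≤ ((n * m * k : ℕ) : ℝ) ^ C * (2 : ℝ) ^ (C * (B : ℝ))) ∧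
          (∀ i j, |Y i j| ≤ ((n * m * k : ℕ) : ℝ) ^ C * (2 : ℝ) ^ (C * (B : ℝ))) := by
  refine ⟨2, two_pos, fun n m k B hn hm hk hB A G hA hrank hAG => ?_⟩
  obtain ⟨c, Y, hGY, hY⟩ := G.exists_eq_submatrix_mul_transpose_abs_le_one hrank
  have hG := abs_apply_le_of_lpPow_sub_le (by omega) hA hAG
  have hbound := one_add_mul_mul_two_pow_le hn hm hk hB
  have hone : (1 : ℝ) ≤ (1 + n * m) * 2 ^ B :=
    one_le_mul_of_one_le_of_one_le (le_add_of_nonneg_right (by positivity))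
      (one_le_pow₀ one_le_two)
  exact ⟨G.submatrix id c, Y, hGY, fun i j => (hG i (c j)).trans hbound,
    fun j s => (hY j s).trans (hone.trans hbound)⟩

/-- **Constant-factor solutions admit bounded factorizations.**  For every even `p ≥ 2`
there is `C_p > 0` such that for every matrix `A` with entries of magnitude at most `2^B`
and every rank-`k` matrix `G` with `‖A − G‖_p^p ≤ ‖A‖_p^p`, there is a factorization
`G = XYᵀ` whose factors have entries of magnitude at most `(nmk)^{C_p}·2^{C_p·B}`. -/
theorem bounded_factorization (p : ℕ) (hpe : Even p) (hp : 2 ≤ p) :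
    ∃ C : ℝ, 0 < C ∧
      ∀ (n m k B : ℕ), 1 ≤ n → 1 ≤ m → 1 ≤ k → 1 ≤ B →
      ∀ A G : Matrix (Fin n) (Fin m) ℝ,
        (∀ i j, |A i j| ≤ 2 ^ B) →
        G.rank = k →
        lpPow p (A - G) ≤ lpPow p A →
        ∃ (X : Matrix (Fin n) (Fin k) ℝ) (Y : Matrix (Fin m) (Fin k) ℝ),
          G = X * Yᵀ ∧
          (∀ i j, |X i j| ≤ ((n * m * k : ℕ) : ℝ) ^ C * (2 : ℝ) ^ (C * (B : ℝ))) ∧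
          (∀ i j, |Y i j| ≤ ((n * m * k : ℕ) : ℝ) ^ C * (2 : ℝ) ^ (C * (B : ℝ))) :=
  bounded_factorization_general p hp
end

section
/- Let p and q be real numbers with 1 < p ≤ 2 ≤ q, and let p* = p/(p−1) and q* = q/(q−1) be their Hölder duals. Let A ∈ ℝ^{n×m} with n, m ≥ 1, and for i ∈ [n] let A_i ∈ ℝ^m denote the i-th row of A. Then for every ε > 0 and every δ with 0 < δ ≤ ε/(2·n·m), and for all x ∈ ℝ^m and y ∈ ℝ^n with ‖x‖_p ≤ 1 and ‖y‖_{q*} ≤ 1, there exist x̄ ∈ ℝ^m and ȳ ∈ ℝ^n, each of whose entries is an integer multiple of δ, such that ‖x̄‖_p ≤ 1, ‖ȳ‖_{q*} ≤ 1, and y^⊤Ax ≤ ȳ^⊤Ax̄ + ε · ( ∑_{i=1}^n ‖A_i‖_{p*}^q )^{1/q}. -/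
/-- The ℓ_r norm of a vector for real `r`: `‖x‖_r = (∑_i |x_i|^r)^{1/r}`. -/
noncomputable def vecLr (r : ℝ) {d : ℕ} (x : Fin d → ℝ) : ℝ :=
  (∑ i, |x i| ^ r) ^ (1 / r)

lemma vecLr_nonneg (r : ℝ) {d : ℕ} (x : Fin d → ℝ) : 0 ≤ vecLr r x :=
  Real.rpow_nonneg (Finset.sum_nonneg fun i _ => Real.rpow_nonneg (abs_nonneg _) _) _

lemma abs_le_vecLr {r : ℝ} (hr : 0 < r) {d : ℕ} (x : Fin d → ℝ) (i : Fin d) :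
    |x i| ≤ vecLr r x := by
  have h1 : |x i| ^ r ≤ ∑ j, |x j| ^ r :=
    Finset.single_le_sum (fun j _ => Real.rpow_nonneg (abs_nonneg _) r) (Finset.mem_univ i)
  calc |x i| = (|x i| ^ r) ^ (1/r) := by
        rw [one_div, Real.rpow_rpow_inv (abs_nonneg _) hr.ne']
    _ ≤ (∑ j, |x j| ^ r) ^ (1/r) :=
        Real.rpow_le_rpow (Real.rpow_nonneg (abs_nonneg _) _) h1 (by positivity)

lemma vecLr_mono {r : ℝ} (hr : 0 < r) {d : ℕ} {x y : Fin d → ℝ}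
    (h : ∀ i, |x i| ≤ |y i|) : vecLr r x ≤ vecLr r y :=
  Real.rpow_le_rpow (Finset.sum_nonneg fun i _ => Real.rpow_nonneg (abs_nonneg _) _)
    (Finset.sum_le_sum fun i _ => Real.rpow_le_rpow (abs_nonneg _) (h i) hr.le)
    (by positivity)

lemma exists_trunc {δ : ℝ} (hδ : 0 < δ) (t : ℝ) :
    ∃ z : ℤ, |(z : ℝ) * δ| ≤ |t| ∧ |t - (z : ℝ) * δ| ≤ δ := by
  rcases le_or_gt 0 t with h | h
  · refine ⟨⌊t / δ⌋, ?_, ?_⟩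
    · have h0 : (0:ℝ) ≤ (⌊t / δ⌋ : ℝ) := by
        exact_mod_cast Int.floor_nonneg.2 (div_nonneg h hδ.le)
      have hle : (⌊t / δ⌋ : ℝ) * δ ≤ t := by
        have := Int.floor_le (t / δ)
        rw [← le_div_iff₀ hδ]; exact this
      rw [abs_of_nonneg (by positivity), abs_of_nonneg h]; exact hle
    · have hle : (⌊t / δ⌋ : ℝ) * δ ≤ t := by
        have := Int.floor_le (t / δ)
        rw [← le_div_iff₀ hδ]; exact this
      have hlt : t < ((⌊t / δ⌋ : ℝ) + 1) * δ := by
        have := Int.lt_floor_add_one (t / δ)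
        rw [← div_lt_iff₀ hδ]; exact this
      rw [abs_of_nonneg (by linarith)]; nlinarith
  · refine ⟨⌈t / δ⌉, ?_, ?_⟩
    · have h0 : (⌈t / δ⌉ : ℝ) ≤ 0 := by
        exact_mod_cast Int.ceil_le.2 (by exact_mod_cast le_of_lt (div_neg_of_neg_of_pos h hδ) : t / δ ≤ ((0:ℤ):ℝ))
      have hle : t ≤ (⌈t / δ⌉ : ℝ) * δ := by
        have := Int.le_ceil (t / δ)
        rw [← div_le_iff₀ hδ]; exact this
      have h0' : (⌈t / δ⌉ : ℝ) * δ ≤ 0 := mul_nonpos_of_nonpos_of_nonneg h0 hδ.le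
      rw [abs_of_nonpos h0', abs_of_neg h]; linarith
    · have hle : t ≤ (⌈t / δ⌉ : ℝ) * δ := by
        have := Int.le_ceil (t / δ)
        rw [← div_le_iff₀ hδ]; exact this
      have hgt : ((⌈t / δ⌉ : ℝ) - 1) * δ < t := by
        have := Int.ceil_lt_add_one (t / δ)
        rw [← lt_div_iff₀ hδ]; linarith
      rw [abs_of_nonpos (by linarith)]; nlinarith

/-- **Discretization for `p → q` norms.**  Let `1 < p ≤ 2 ≤ q` with Hölder duals
`p* = p/(p−1)`, `q* = q/(q−1)`.  For every `ε > 0`, every grid fineness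
`0 < δ ≤ ε/(2nm)`, and all `x, y` with `‖x‖_p ≤ 1`, `‖y‖_{q*} ≤ 1`, there are vectors
`x̄, ȳ` with entries which are integer multiples of `δ`, satisfying `‖x̄‖_p ≤ 1`,
`‖ȳ‖_{q*} ≤ 1`, and `yᵀAx ≤ ȳᵀAx̄ + ε·(∑_i ‖A_i‖_{p*}^q)^{1/q}`. -/
theorem p_to_q_discretization (p q : ℝ) (hp1 : 1 < p) (hp2 : p ≤ 2) (hq : 2 ≤ q)
    (n m : ℕ) (hn : 1 ≤ n) (hm : 1 ≤ m) (A : Matrix (Fin n) (Fin m) ℝ)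
    (ε δ : ℝ) (hε : 0 < ε) (hδ : 0 < δ) (hδε : δ ≤ ε / (2 * n * m))
    (x : Fin m → ℝ) (y : Fin n → ℝ)
    (hx : vecLr p x ≤ 1) (hy : vecLr (q / (q - 1)) y ≤ 1) :
    ∃ (xb : Fin m → ℝ) (yb : Fin n → ℝ),
      (∀ j, ∃ z : ℤ, xb j = (z : ℝ) * δ) ∧
      (∀ i, ∃ z : ℤ, yb i = (z : ℝ) * δ) ∧
      vecLr p xb ≤ 1 ∧
      vecLr (q / (q - 1)) yb ≤ 1 ∧
      (∑ i, ∑ j, y i * A i j * x j)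
        ≤ (∑ i, ∑ j, yb i * A i j * xb j)
          + ε * (∑ i, (vecLr (p / (p - 1)) (fun j => A i j)) ^ q) ^ (1 / q) := by
  have hp0 : (0:ℝ) < p := by linarith
  have hq0 : (0:ℝ) < q := by linarith
  have hq1 : (0:ℝ) < q - 1 := by linarith
  have hqs : (0:ℝ) < q / (q - 1) := div_pos hq0 hq1
  have hps : (0:ℝ) < p / (p - 1) := div_pos hp0 (by linarith)
  -- choose truncations
  choose zx hzx1 hzx2 using fun j => exists_trunc hδ (x j)
  choose zy hzy1 hzy2 using fun i => exists_trunc hδ (y i)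
  set xb : Fin m → ℝ := fun j => (zx j : ℝ) * δ with hxb
  set yb : Fin n → ℝ := fun i => (zy i : ℝ) * δ with hyb
  have hxbn : vecLr p xb ≤ 1 := le_trans (vecLr_mono hp0 hzx1) hx
  have hybn : vecLr (q / (q - 1)) yb ≤ 1 := le_trans (vecLr_mono hqs hzy1) hy
  -- coordinatewise bounds
  have hx1 : ∀ j, |x j| ≤ 1 := fun j => le_trans (abs_le_vecLr hp0 x j) hx
  have hy1 : ∀ i, |y i| ≤ 1 := fun i => le_trans (abs_le_vecLr hqs y i) hy
  have hxb1 : ∀ j, |xb j| ≤ 1 := fun j => le_trans (hzx1 j) (hx1 j)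
  -- bound on entries of A
  set B : ℝ := (∑ i, (vecLr (p / (p - 1)) (fun j => A i j)) ^ q) ^ (1 / q) with hB
  have hBnn : 0 ≤ B := Real.rpow_nonneg
    (Finset.sum_nonneg fun i _ => Real.rpow_nonneg (vecLr_nonneg _ _) _) _
  have hAB : ∀ i j, |A i j| ≤ B := by
    intro i j
    have h1 : |A i j| ≤ vecLr (p / (p - 1)) (fun j => A i j) :=
      abs_le_vecLr hps _ j
    have h2 : (vecLr (p / (p - 1)) (fun j => A i j)) ^ q
        ≤ ∑ i', (vecLr (p / (p - 1)) (fun j => A i' j)) ^ q :=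
      Finset.single_le_sum (f := fun i' => (vecLr (p / (p - 1)) (fun j => A i' j)) ^ q)
        (fun i' _ => Real.rpow_nonneg (vecLr_nonneg _ _) _) (Finset.mem_univ i)
    calc |A i j| ≤ vecLr (p / (p - 1)) (fun j => A i j) := h1
      _ = ((vecLr (p / (p - 1)) (fun j => A i j)) ^ q) ^ (1/q) := by
          rw [one_div, Real.rpow_rpow_inv (vecLr_nonneg _ _) hq0.ne']
      _ ≤ B := Real.rpow_le_rpow (Real.rpow_nonneg (vecLr_nonneg _ _) _) h2 (by positivity)
  refine ⟨xb, yb, fun j => ⟨zx j, rfl⟩, fun i => ⟨zy i, rfl⟩, hxbn, hybn, ?_⟩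
  -- main estimate
  have hterm : ∀ i j, y i * A i j * x j - yb i * A i j * xb j ≤ 2 * δ * B := by
    intro i j
    have e : y i * A i j * x j - yb i * A i j * xb j
        = y i * A i j * (x j - xb j) + (y i - yb i) * A i j * xb j := by ring
    have h1 : y i * A i j * (x j - xb j) ≤ δ * B := by
      calc y i * A i j * (x j - xb j) ≤ |y i * A i j * (x j - xb j)| := le_abs_self _
        _ = |y i| * |A i j| * |x j - xb j| := by rw [abs_mul, abs_mul]
        _ ≤ 1 * B * δ := by
            exact mul_le_mul (mul_le_mul (hy1 i) (hAB i j) (abs_nonneg _) zero_le_one)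
              (hzx2 j) (abs_nonneg _) (by positivity)
        _ = δ * B := by ring
    have h2 : (y i - yb i) * A i j * xb j ≤ δ * B := by
      calc (y i - yb i) * A i j * xb j ≤ |(y i - yb i) * A i j * xb j| := le_abs_self _
        _ = |y i - yb i| * |A i j| * |xb j| := by rw [abs_mul, abs_mul]
        _ ≤ δ * B * 1 := by
            exact mul_le_mul (mul_le_mul (hzy2 i) (hAB i j) (abs_nonneg _) hδ.le)
              (hxb1 j) (abs_nonneg _) (by positivity)
        _ = δ * B := by ring
    rw [e]; linarith
  have hsum : (∑ i, ∑ j, y i * A i j * x j) - (∑ i, ∑ j, yb i * A i j * xb j)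
      ≤ (n : ℝ) * m * (2 * δ * B) := by
    rw [← Finset.sum_sub_distrib]
    calc ∑ i, ((∑ j, y i * A i j * x j) - ∑ j, yb i * A i j * xb j)
        = ∑ i, ∑ j, (y i * A i j * x j - yb i * A i j * xb j) := by
          simp [Finset.sum_sub_distrib]
      _ ≤ ∑ i : Fin n, ∑ j : Fin m, 2 * δ * B :=
          Finset.sum_le_sum fun i _ => Finset.sum_le_sum fun j _ => hterm i j
      _ = (n : ℝ) * m * (2 * δ * B) := by
          simp [Finset.sum_const, mul_assoc]
  have hnm : (0:ℝ) < 2 * n * m := by positivity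
  have hδε' : 2 * (n:ℝ) * m * δ ≤ ε := by
    rw [le_div_iff₀ hnm] at hδε; linarith
  have hfin : (n : ℝ) * m * (2 * δ * B) ≤ ε * B := by
    have : (n:ℝ) * m * (2 * δ) ≤ ε := by nlinarith
    nlinarith
  linarith [hsum, hfin]
end
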